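/- arXiv:1402.6553 — 6 statements merged into one kernel-verified Lean document; each statement's English description precedes it below -/
import Mathlib

section
/- Let (G_n, o_n) be a sequence of finite rooted simple graphs with |G_n| → ∞, and let (x_n) be a critical sequence of positive reals for this family. Then a sequence (y_n) of positive reals is also critical if and only if x_n / y_n → 1 as n → ∞. -/
open Filter Topology

/-- A self-avoiding walk from `o` in the graph `G`, encoded as the (nonempty) list of
visited vertices: it starts at `o`, consecutive vertices are adjacent, and no vertex is
visited more than once.  A list of length `k+1` corresponds to a walk with `k` edges. -/
def IsSAWFrom {V : Type*} (G : SimpleGraph V) (o : V) (l : List V) : Prop :=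
  l.head? = some o ∧ l.Chain' G.Adj ∧ l.Nodup

/-- `sawCount G o k = |SAW_k(o,G)|`, the number of self-avoiding walks from `o` with
exactly `k` edges. -/
noncomputable def sawCount {V : Type*} (G : SimpleGraph V) (o : V) (k : ℕ) : ℕ :=
  Nat.card {l : List V // IsSAWFrom G o l ∧ l.length = k + 1}

/-- The partition function `Z_{o,G}(x) = Σ_k |SAW_k(o,G)| x^k`.  Since a self-avoiding
walk in a graph on `|V|` vertices has at most `|V| - 1` edges, the sum over
`k < |V|` captures all nonzero terms. -/
noncomputable def sawZ {V : Type*} [Fintype V] (G : SimpleGraph V) (o : V) (x : ℝ) : ℝ :=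
  ∑ k ∈ Finset.range (Fintype.card V), (sawCount G o k : ℝ) * x ^ k

/-- The expected length `L(x,o,G) = Z_{o,G}(x)⁻¹ Σ_k k |SAW_k(o,G)| x^k`. -/
noncomputable def sawL {V : Type*} [Fintype V] (G : SimpleGraph V) (o : V) (x : ℝ) : ℝ :=
  (sawZ G o x)⁻¹ *
    ∑ k ∈ Finset.range (Fintype.card V), (k : ℝ) * (sawCount G o k : ℝ) * x ^ k

/-- The number of pairs `(ω, ω')` of self-avoiding walks from `o`, with `k` resp. `j`
edges, whose vertex sets intersect exactly in `{o}`. -/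
noncomputable def sawPairCount {V : Type*} (G : SimpleGraph V) (o : V) (k j : ℕ) : ℕ :=
  Nat.card {p : List V × List V //
    (IsSAWFrom G o p.1 ∧ p.1.length = k + 1) ∧
    (IsSAWFrom G o p.2 ∧ p.2.length = j + 1) ∧
    {v | v ∈ p.1 ∧ v ∈ p.2} = {o}}

/-- The trivial-intersection probability
`I(x,o,G) = Z_{o,G}(x)⁻² Σ x^{|ω|+|ω'|}`, summed over pairs of self-avoiding walks
from `o` whose vertex sets meet only in `o`. -/
noncomputable def sawI {V : Type*} [Fintype V] (G : SimpleGraph V) (o : V) (x : ℝ) : ℝ :=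
  ((sawZ G o x) ^ 2)⁻¹ *
    ∑ k ∈ Finset.range (Fintype.card V), ∑ j ∈ Finset.range (Fintype.card V),
      (sawPairCount G o k j : ℝ) * x ^ (k + j)

/-- The finite-graph critical exponent `γ(x,o,G) = log Z_{o,G}(x) / log (L(x,o,G) + 1)`. -/
noncomputable def sawGamma {V : Type*} [Fintype V] (G : SimpleGraph V) (o : V) (x : ℝ) : ℝ :=
  Real.log (sawZ G o x) / Real.log (sawL G o x + 1)

/-- A graph is vertex-transitive if its automorphism group acts transitively on vertices. -/
def SimpleGraph.VertexTransitive {V : Type*} (G : SimpleGraph V) : Prop :=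
  ∀ u v : V, ∃ φ : G ≃g G, φ u = v

/-- A graph is `d`-regular: every vertex has exactly `d` neighbours. -/
def SawRegular {V : Type*} (G : SimpleGraph V) (d : ℕ) : Prop :=
  ∀ v : V, Nat.card (G.neighborSet v) = d

/-- `(x n)` is super-critical for the rooted family `(G n, o n)`:
`liminf_n Z_{o_n, G_n}(x_n) = ∞`, i.e. `Z` tends to infinity. -/
def SawSuperCritical {V : ℕ → Type*} [∀ n, Fintype (V n)]
    (G : ∀ n, SimpleGraph (V n)) (o : ∀ n, V n) (x : ℕ → ℝ) : Prop :=
  Tendsto (fun n => sawZ (G n) (o n) (x n)) atTop atTop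

/-- `(x n)` is sub-critical for the rooted family `(G n, o n)`:
`limsup_n Z_{o_n, G_n}(x_n) < ∞`, i.e. the sequence of partition functions is bounded. -/
def SawSubCritical {V : ℕ → Type*} [∀ n, Fintype (V n)]
    (G : ∀ n, SimpleGraph (V n)) (o : ∀ n, V n) (x : ℕ → ℝ) : Prop :=
  BddAbove (Set.range fun n => sawZ (G n) (o n) (x n))

/-- `(x n)` is critical: for every `0 < ε < 1`, `(x n (1+ε))` is super-critical and
`(x n (1-ε))` is sub-critical. -/
def SawCritical {V : ℕ → Type*} [∀ n, Fintype (V n)]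
    (G : ∀ n, SimpleGraph (V n)) (o : ∀ n, V n) (x : ℕ → ℝ) : Prop :=
  ∀ ε : ℝ, 0 < ε → ε < 1 →
    SawSuperCritical G o (fun n => x n * (1 + ε)) ∧
    SawSubCritical G o (fun n => x n * (1 - ε))

/-- `Z_{K_n}(x)` for the complete graph `K_n` on `n` vertices, rooted at an arbitrary
vertex (all choices agree by symmetry); junk value `0` for `n = 0`. -/
noncomputable def completeZ (n : ℕ) (x : ℝ) : ℝ :=
  if h : 0 < n then sawZ (⊤ : SimpleGraph (Fin n)) ⟨0, h⟩ x else 0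

/-- `L(x, K_n)` for the complete graph `K_n`; junk value `0` for `n = 0`. -/
noncomputable def completeL (n : ℕ) (x : ℝ) : ℝ :=
  if h : 0 < n then sawL (⊤ : SimpleGraph (Fin n)) ⟨0, h⟩ x else 0

/-- `I(x, K_n)` for the complete graph `K_n`; junk value `0` for `n = 0`. -/
noncomputable def completeI (n : ℕ) (x : ℝ) : ℝ :=
  if h : 0 < n then sawI (⊤ : SimpleGraph (Fin n)) ⟨0, h⟩ x else 0

/-- `γ(x, K_n)` for the complete graph `K_n`; junk value `0` for `n = 0`. -/
noncomputable def completeGamma (n : ℕ) (x : ℝ) : ℝ :=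
  if h : 0 < n then sawGamma (⊤ : SimpleGraph (Fin n)) ⟨0, h⟩ x else 0

/-- A non-backtracking walk in `G`, encoded as the list of visited vertices:
consecutive vertices are adjacent and `ω_{j+2} ≠ ω_j` for all `j`. -/
def IsNBWalk {V : Type*} (G : SimpleGraph V) (l : List V) : Prop :=
  l.Chain' G.Adj ∧ ∀ i, i + 2 < l.length → l[i]? ≠ l[i + 2]?

/-- The number of non-backtracking walks of length `t` from `u` to `v`. -/
noncomputable def nbCount {V : Type*} (G : SimpleGraph V) (u v : V) (t : ℕ) : ℕ :=
  Nat.card {l : List V //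
    IsNBWalk G l ∧ l.length = t + 1 ∧ l.head? = some u ∧ l.getLast? = some v}

/-- `p_t(u,v)`: the number of non-backtracking walks of length `t` from `u` to `v`
divided by `d(d-1)^{t-1}`, i.e. the probability that the non-backtracking random walk
on a `d`-regular graph started at `u` is at `v` at time `t`. -/
noncomputable def nbProb {V : Type*} (G : SimpleGraph V) (d : ℕ) (u v : V) (t : ℕ) : ℝ :=
  (nbCount G u v t : ℝ) / (d * ((d : ℝ) - 1) ^ (t - 1))

/-- The mixing time of the non-backtracking random walk on the `d`-regular graph `G`
with `N` vertices: the least `t ≥ 1` with `|p_t(u,v) - 1/N| ≤ 1/(2N)` for all `u, v`. -/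
noncomputable def nbMixingTime {V : Type*} [Fintype V] (G : SimpleGraph V) (d : ℕ) : ℕ :=
  sInf {t : ℕ | 1 ≤ t ∧ ∀ u v : V,
    |nbProb G d u v t - 1 / (Fintype.card V : ℝ)| ≤ 1 / (2 * (Fintype.card V : ℝ))}

private lemma sawZ_mono {V : Type*} [Fintype V] (G : SimpleGraph V) (o : V)
    {a b : ℝ} (ha : 0 ≤ a) (hab : a ≤ b) : sawZ G o a ≤ sawZ G o b := by
  refine Finset.sum_le_sum fun k _ => ?_
  exact mul_le_mul_of_nonneg_left (pow_le_pow_left₀ ha hab k) (Nat.cast_nonneg _)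

private lemma bddAbove_of_eventually {f : ℕ → ℝ} {M : ℝ}
    (h : ∀ᶠ n in atTop, f n ≤ M) : BddAbove (Set.range f) := by
  obtain ⟨N, hN⟩ := eventually_atTop.mp h
  refine ⟨max M ((Finset.range (N + 1)).sup' (by simp) f), ?_⟩
  rintro _ ⟨n, rfl⟩
  rcases le_or_gt N n with hn | hn
  · exact le_max_of_le_left (hN n hn)
  · exact le_max_of_le_right (Finset.le_sup' f (Finset.mem_range.mpr (by omega)))

private lemma eventually_lt_of_super_sub {V : ℕ → Type*} [∀ n, Fintype (V n)]
    {G : ∀ n, SimpleGraph (V n)} {o : ∀ n, V n} {a b : ℕ → ℝ}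
    (ha0 : ∀ n, 0 < a n)
    (ha' : SawSuperCritical G o a) (hb' : SawSubCritical G o b) :
    ∀ᶠ n in atTop, b n < a n := by
  obtain ⟨M, hM⟩ := hb'
  filter_upwards [ha'.eventually_gt_atTop M] with n hn
  by_contra hle
  push_neg at hle
  exact absurd hn (not_lt.mpr ((sawZ_mono _ _ (ha0 n).le hle).trans
    (hM ⟨n, rfl⟩)))

/-- For a sequence of finite rooted graphs with `|G_n| → ∞` and a
critical sequence `(x_n)` of positive reals, a positive sequence `(y_n)` is critical
if and only if `x_n / y_n → 1`. -/
theorem saw_critical_unique {V : ℕ → Type*} [∀ n, Fintype (V n)]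
    (G : ∀ n, SimpleGraph (V n)) (o : ∀ n, V n)
    (hcard : Tendsto (fun n => Fintype.card (V n)) atTop atTop)
    (x : ℕ → ℝ) (hx : ∀ n, 0 < x n) (hxcrit : SawCritical G o x)
    (y : ℕ → ℝ) (hy : ∀ n, 0 < y n) :
    SawCritical G o y ↔ Tendsto (fun n => x n / y n) atTop (𝓝 1) := by
  constructor
  · intro hycrit
    rw [Metric.tendsto_atTop]
    intro δ hδ
    set ε : ℝ := min δ 1 / 3 with hεdef
    have hε0 : 0 < ε := by positivity
    have h3δ : 3 * ε ≤ δ := by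
      have := min_le_left δ 1; rw [hεdef]; linarith
    have h31 : 3 * ε ≤ 1 := by
      have := min_le_right δ 1; rw [hεdef]; linarith
    have hε1 : ε < 1 := by linarith
    have hA := eventually_lt_of_super_sub
      (fun n => by have := hy n; nlinarith : ∀ n, 0 < y n * (1 + ε))
      ((hycrit ε hε0 hε1).1) ((hxcrit ε hε0 hε1).2)
    have hB := eventually_lt_of_super_sub
      (fun n => by have := hx n; nlinarith : ∀ n, 0 < x n * (1 + ε))
      ((hxcrit ε hε0 hε1).1) ((hycrit ε hε0 hε1).2)
    obtain ⟨N, hN⟩ := eventually_atTop.mp (hA.and hB)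
    refine ⟨N, fun n hn => ?_⟩
    obtain ⟨h1, h2⟩ := hN n hn
    have hyn := hy n
    have hxn := hx n
    rw [Real.dist_eq, abs_sub_lt_iff]
    constructor
    · rw [sub_lt_iff_lt_add, div_lt_iff₀ hyn]
      nlinarith
    · rw [sub_lt_comm, lt_div_iff₀ hyn]
      nlinarith
  · intro h
    intro ε hε0 hε1
    constructor
    · -- supercritical: y n * (1+ε) eventually ≥ x n * (1+ε'')
      set ε'' : ℝ := (1 + ε) / (1 + ε / 3) - 1 with hdef
      have hd0 : (0 : ℝ) < 1 + ε / 3 := by linarith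
      have hε''0 : 0 < ε'' := by
        rw [hdef, sub_pos, lt_div_iff₀ hd0]; linarith
      have hε''1 : ε'' < 1 := by
        rw [hdef, sub_lt_iff_lt_add, div_lt_iff₀ hd0]; linarith
      have hsup := (hxcrit ε'' hε''0 hε''1).1
      refine tendsto_atTop_mono' atTop ?_ hsup
      have hev : ∀ᶠ n in atTop, x n / y n < 1 + ε / 3 :=
        h.eventually_lt_const (by linarith)
      filter_upwards [hev] with n hn
      have hyn := hy n
      have hxn := hx n
      have hxy : x n < y n * (1 + ε / 3) := by
        rw [div_lt_iff₀ hyn] at hn; linarith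
      refine sawZ_mono _ _ (by nlinarith) ?_
      have : x n * (1 + ε'') = x n * (1 + ε) / (1 + ε / 3) := by
        rw [hdef]; field_simp; ring
      rw [this, div_le_iff₀ hd0]
      nlinarith
    · -- subcritical: y n * (1-ε) eventually ≤ x n * (1-ε')
      set ε' : ℝ := (ε / 2) / (1 - ε / 2) with hdef
      have hd0 : (0 : ℝ) < 1 - ε / 2 := by linarith
      have hε'0 : 0 < ε' := by positivity
      have hε'1 : ε' < 1 := by
        rw [hdef, div_lt_one hd0]; linarith
      obtain ⟨M, hM⟩ := (hxcrit ε' hε'0 hε'1).2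
      have hev : ∀ᶠ n in atTop, 1 - ε / 2 < x n / y n :=
        h.eventually_const_lt (by linarith)
      refine bddAbove_of_eventually (M := M) ?_
      filter_upwards [hev] with n hn
      have hyn := hy n
      have hxn := hx n
      have hxy : y n * (1 - ε / 2) < x n := by
        rw [lt_div_iff₀ hyn] at hn; linarith
      refine le_trans (sawZ_mono _ _ (by nlinarith) ?_) (hM ⟨n, rfl⟩)
      show y n * (1 - ε) ≤ x n * (1 - ε')
      have : x n * (1 - ε') = x n * (1 - ε / 2 - ε / 2) / (1 - ε / 2) := by
        have h2 : (2 : ℝ) - ε ≠ 0 := ne_of_gt (by linarith)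
        rw [hdef, eq_div_iff hd0.ne']
        field_simp [h2]
      rw [this, le_div_iff₀ hd0]
      nlinarith
end

section
/- Let G be a finite vertex-transitive simple graph. Then for every x > 0, L(x,G) + 1 = I(x,G) · Z_G(x). -/
open Filter Topology

/-! Cutting a self-avoiding walk with `k + j` edges at its vertex `v` of index `k` yields two
self-avoiding walks from `v`, with `k` and `j` edges, that meet only at `v`; gluing them back
inverts this. Summing over `v`, the pairs rooted anywhere are as many as the walks with `k + j`
edges started anywhere, and vertex-transitivity makes both counts `|V|` times the count at `o`.
So the pair sum defining `I·Z²` is `Σ_n (n + 1) |SAW_n(o,G)| x^n = Z·(L + 1)`. -/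

open Finset

theorem Nat.card_eq_sum_card_fiber {α β : Type*} [Finite α] [Fintype β] (f : α → β) :
    Nat.card α = ∑ b, Nat.card {a // f a = b} :=
  (Nat.card_congr (Equiv.sigmaFiberEquiv f).symm).trans Nat.card_sigma

theorem Finset.sum_range_sum_range_add {M : Type*} [AddCommMonoid M] {N : ℕ} (f : ℕ → M)
    (hf : ∀ n, N ≤ n → f n = 0) :
    ∑ k ∈ range N, ∑ j ∈ range N, f (k + j) = ∑ n ∈ range N, (n + 1) • f n := by
  have htail : ∀ k ∈ range N, ∑ j ∈ range N, f (k + j) = ∑ n ∈ Ico k N, f n := by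
    intro k _
    rw [sum_Ico_eq_sum_range]
    refine (sum_subset (range_subset_range.mpr (N.sub_le k)) fun j _ hj => hf _ ?_).symm
    simp only [mem_range, not_lt] at hj
    omega
  rw [sum_congr rfl htail, sum_comm' (t' := range N) (s' := fun n => range (n + 1))]
  · simp
  · intro k n
    simp only [mem_range, mem_Ico]
    omega

section Iso

variable {V W : Type*} {G : SimpleGraph V} {G' : SimpleGraph W}

theorem isSAWFrom_map_iff (φ : G ≃g G') {o : V} {l : List V} :
    IsSAWFrom G' (φ o) (l.map φ) ↔ IsSAWFrom G o l := by
  simp [IsSAWFrom, List.Chain', List.isChain_map, φ.map_adj_iff, List.nodup_map_iff φ.injective]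

theorem setOf_mem_map_and_mem_map_eq_singleton_iff {f : V → W} (hf : f.Injective) {o : V}
    {a b : List V} : {w | w ∈ a.map f ∧ w ∈ b.map f} = {f o} ↔ {v | v ∈ a ∧ v ∈ b} = {o} := by
  have himage : {w | w ∈ a.map f ∧ w ∈ b.map f} = f '' {v | v ∈ a ∧ v ∈ b} :=
    calc {w | w ∈ a.map f ∧ w ∈ b.map f} = f '' {v | v ∈ a} ∩ f '' {v | v ∈ b} := by ext; simp
      _ = f '' {v | v ∈ a ∧ v ∈ b} := (Set.image_inter hf).symm
  rw [himage, ← Set.image_singleton, hf.image_injective.eq_iff]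

theorem sawCount_iso (φ : G ≃g G') (o : V) (k : ℕ) : sawCount G' (φ o) k = sawCount G o k :=
  Nat.card_congr ((Equiv.listEquivOfEquiv φ.toEquiv).subtypeEquiv fun l => by
    simp [Equiv.listEquivOfEquiv, isSAWFrom_map_iff]).symm

theorem sawPairCount_iso (φ : G ≃g G') (o : V) (k j : ℕ) :
    sawPairCount G' (φ o) k j = sawPairCount G o k j := by
  let e := Equiv.listEquivOfEquiv φ.toEquiv
  refine Nat.card_congr ((e.prodCongr e).subtypeEquiv fun q => ?_).symm
  simp only [e, Equiv.prodCongr_apply, Prod.map_fst, Prod.map_snd, Equiv.listEquivOfEquiv,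
    Equiv.coe_fn_mk, RelIso.coe_fn_toEquiv, List.length_map, isSAWFrom_map_iff,
    setOf_mem_map_and_mem_map_eq_singleton_iff φ.injective]

end Iso

section Split

variable {V : Type*} {G : SimpleGraph V}

def IsSAW (G : SimpleGraph V) (n : ℕ) (l : List V) : Prop :=
  l.IsChain G.Adj ∧ l.Nodup ∧ l.length = n + 1

theorem isChain_reverse_append_cons_iff {v : V} {p s : List V} :
    (p.reverse ++ v :: s).IsChain G.Adj ↔ (v :: p).IsChain G.Adj ∧ (v :: s).IsChain G.Adj := by
  have hsymm : (fun a b => G.Adj b a) = G.Adj := by ext a b; exact G.adj_comm b a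
  rw [List.isChain_split, ← List.reverse_cons, List.isChain_reverse, hsymm]

theorem nodup_reverse_append_cons_iff {v : V} {p s : List V} :
    (p.reverse ++ v :: s).Nodup ↔
      (v :: p).Nodup ∧ (v :: s).Nodup ∧ {w | w ∈ v :: p ∧ w ∈ v :: s} = {v} := by
  simp only [List.nodup_append, List.nodup_reverse, List.nodup_cons, List.mem_reverse,
    List.mem_cons, Set.ext_iff, Set.mem_ofPred_eq, Set.mem_singleton_iff]
  grind

theorem isSAW_reverse_append_cons_iff {v : V} {p s : List V} {i j : ℕ} :
    IsSAW G (i + j) (p.reverse ++ v :: s) ∧ p.length = i ↔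
      (IsSAWFrom G v (v :: p) ∧ (v :: p).length = i + 1) ∧
      (IsSAWFrom G v (v :: s) ∧ (v :: s).length = j + 1) ∧
      {w | w ∈ v :: p ∧ w ∈ v :: s} = {v} := by
  simp only [IsSAW, IsSAWFrom, List.Chain', isChain_reverse_append_cons_iff,
    nodup_reverse_append_cons_iff, List.length_append, List.length_reverse, List.length_cons,
    List.head?_cons]
  grind

theorem exists_eq_reverse_append_cons_of_getElem?_eq_some {l : List V} {i : ℕ} {v : V}
    (h : l[i]? = some v) : ∃ p s : List V, p.length = i ∧ l = p.reverse ++ v :: s := by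
  obtain ⟨hi, rfl⟩ := List.getElem?_eq_some_iff.mp h
  refine ⟨(l.take i).reverse, l.drop (i + 1), by simp [hi.le], ?_⟩
  rw [List.reverse_reverse, ← List.drop_eq_getElem_cons, List.take_append_drop]

def isSAWSplitEquiv (v : V) (i j : ℕ) :
    {l // IsSAW G (i + j) l ∧ l[i]? = some v} ≃
      {q : List V × List V // (IsSAWFrom G v q.1 ∧ q.1.length = i + 1) ∧
        (IsSAWFrom G v q.2 ∧ q.2.length = j + 1) ∧ {w | w ∈ q.1 ∧ w ∈ q.2} = {v}} where
  toFun l := ⟨(v :: (l.1.take i).reverse, l.1.drop i), by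
    obtain ⟨l, hl, hv⟩ := l
    obtain ⟨p, s, rfl, rfl⟩ := exists_eq_reverse_append_cons_of_getElem?_eq_some hv
    simpa [List.take_left', List.drop_left'] using isSAW_reverse_append_cons_iff.mp ⟨hl, rfl⟩⟩
  invFun q := ⟨q.1.1.tail.reverse ++ q.1.2, by
    obtain ⟨⟨a, b⟩, hq⟩ := q
    obtain ⟨p, rfl⟩ := List.head?_eq_some_iff.mp hq.1.1.1
    obtain ⟨s, rfl⟩ := List.head?_eq_some_iff.mp hq.2.1.1.1
    obtain ⟨hl, rfl⟩ := isSAW_reverse_append_cons_iff.mpr hq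
    exact ⟨hl, by simp⟩⟩
  left_inv l := by ext; simp
  right_inv q := by
    obtain ⟨⟨a, b⟩, hq⟩ := q
    obtain ⟨p, rfl⟩ := List.head?_eq_some_iff.mp hq.1.1.1
    obtain ⟨s, rfl⟩ := List.head?_eq_some_iff.mp hq.2.1.1.1
    obtain ⟨-, rfl⟩ := isSAW_reverse_append_cons_iff.mpr hq
    ext <;> simp [List.take_left', List.drop_left']

theorem card_isSAW_getElem?_eq_sawPairCount (v : V) (i j : ℕ) :
    Nat.card {l // IsSAW G (i + j) l ∧ l[i]? = some v} = sawPairCount G v i j :=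
  Nat.card_congr (isSAWSplitEquiv v i j)

theorem card_isSAW_getElem?_zero_eq_sawCount (v : V) (n : ℕ) :
    Nat.card {l // IsSAW G n l ∧ l[0]? = some v} = sawCount G v n :=
  Nat.card_congr <| Equiv.subtypeEquivRight fun l => by
    rw [IsSAW, IsSAWFrom, List.Chain', List.head?_eq_getElem?]
    tauto

theorem sum_card_isSAW_getElem? [Fintype V] {n i : ℕ} (hi : i ≤ n) :
    ∑ v, Nat.card {l // IsSAW G n l ∧ l[i]? = some v} = Nat.card {l // IsSAW G n l} := by
  have : Finite {l // IsSAW G n l} :=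
    ((List.finite_length_eq V (n + 1)).subset fun l hl => hl.2.2).to_subtype
  let vertexAt (l : {l // IsSAW G n l}) : V := l.1[i]'(by rw [l.2.2.2]; omega)
  rw [Nat.card_eq_sum_card_fiber vertexAt]
  refine sum_congr rfl fun v _ => Nat.card_congr ?_
  refine (Equiv.subtypeSubtypeEquivSubtypeInter _ (fun l : List V => l[i]? = some v)).symm.trans
    (Equiv.subtypeEquivRight fun l => ?_)
  have hil : i < l.1.length := by rw [l.2.2.2]; omega
  simp [vertexAt, hil]

end Split

section Transitive

variable {V : Type*} {G : SimpleGraph V} [Fintype V]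

theorem sum_sawPairCount_eq_sum_sawCount (i j : ℕ) :
    ∑ v, sawPairCount G v i j = ∑ v, sawCount G v (i + j) := by
  simp_rw [← card_isSAW_getElem?_eq_sawPairCount, ← card_isSAW_getElem?_zero_eq_sawCount]
  rw [sum_card_isSAW_getElem? (Nat.le_add_right i j), sum_card_isSAW_getElem? (Nat.zero_le _)]

theorem SimpleGraph.VertexTransitive.sum_eq_card_nsmul (hG : G.VertexTransitive) {M : Type*}
    [AddCommMonoid M] {f : V → M} (hf : ∀ (φ : G ≃g G) v, f (φ v) = f v) (o : V) :
    ∑ v, f v = Fintype.card V • f o := by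
  rw [← card_univ, ← sum_const]
  refine sum_congr rfl fun v _ => ?_
  obtain ⟨φ, rfl⟩ := hG o v
  exact hf φ o

theorem sawPairCount_eq_sawCount_add (hG : G.VertexTransitive) (o : V) (i j : ℕ) :
    sawPairCount G o i j = sawCount G o (i + j) := by
  have h := sum_sawPairCount_eq_sum_sawCount (G := G) i j
  rw [hG.sum_eq_card_nsmul (fun φ v => sawPairCount_iso φ v i j) o,
    hG.sum_eq_card_nsmul (fun φ v => sawCount_iso φ v (i + j)) o, smul_eq_mul, smul_eq_mul] at h
  exact Nat.eq_of_mul_eq_mul_left (Fintype.card_pos_iff.mpr ⟨o⟩) h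

end Transitive

section PartitionFunction

variable {V : Type*} {G : SimpleGraph V}

theorem sawCount_zero (o : V) : sawCount G o 0 = 1 := by
  have hsingle : ∀ l : List V, IsSAWFrom G o l ∧ l.length = 0 + 1 ↔ l = [o] := by
    intro l
    constructor
    · rintro ⟨⟨hhead, -⟩, hlen⟩
      obtain ⟨a, rfl⟩ := List.length_eq_one_iff.mp hlen
      simpa using hhead
    · rintro rfl
      simp [IsSAWFrom, List.Chain']
  rw [sawCount, Nat.card_congr (Equiv.subtypeEquivRight hsingle)]
  simp

theorem sawCount_eq_zero_of_card_le [Fintype V] {o : V} {k : ℕ} (hk : Fintype.card V ≤ k) :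
    sawCount G o k = 0 := by
  have : IsEmpty {l : List V // IsSAWFrom G o l ∧ l.length = k + 1} :=
    ⟨fun ⟨l, ⟨_, _, hnodup⟩, hlen⟩ => by have := hnodup.length_le_card; omega⟩
  exact Nat.card_of_isEmpty

theorem one_le_sawZ [Fintype V] (o : V) {x : ℝ} (hx : 0 ≤ x) : 1 ≤ sawZ G o x :=
  calc (1 : ℝ) = sawCount G o 0 * x ^ 0 := by simp [sawCount_zero]
    _ ≤ sawZ G o x := single_le_sum (f := fun k => (sawCount G o k : ℝ) * x ^ k)
      (fun k _ => by positivity) (mem_range.mpr (Fintype.card_pos_iff.mpr ⟨o⟩))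

end PartitionFunction

/-- For a finite vertex-transitive graph `G` and any `x > 0`,
`L(x,G) + 1 = I(x,G) · Z_G(x)`. -/
theorem saw_length_eq_intersection_mul_partition {V : Type*} [Fintype V]
    (G : SimpleGraph V) (hG : G.VertexTransitive) (o : V) (x : ℝ) (hx : 0 < x) :
    sawL G o x + 1 = sawI G o x * sawZ G o x := by
  have hZ : sawZ G o x ≠ 0 := (zero_lt_one.trans_le (one_le_sawZ o hx.le)).ne'
  have hpairs : ∑ k ∈ range (Fintype.card V), ∑ j ∈ range (Fintype.card V),
      (sawPairCount G o k j : ℝ) * x ^ (k + j) =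
      ∑ n ∈ range (Fintype.card V), (n : ℝ) * sawCount G o n * x ^ n + sawZ G o x := by
    simp_rw [sawPairCount_eq_sawCount_add hG]
    rw [sum_range_sum_range_add (fun n => (sawCount G o n : ℝ) * x ^ n)
      fun n hn => by simp [sawCount_eq_zero_of_card_le hn], sawZ, ← sum_add_distrib]
    exact sum_congr rfl fun n _ => by simp only [nsmul_eq_mul]; push_cast; ring
  rw [sawL, sawI, hpairs]
  field_simp
end

section
/- For the sequence of complete graphs K_n on n vertices, the constant sequence x_n = 1/n is a critical sequence: for every 0 < ε < 1, liminf_n Z_{K_n}((1+ε)/n) = ∞ and limsup_n Z_{K_n}((1−ε)/n) < ∞. -/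
open Filter Topology

/-!
In `K_n` a self-avoiding walk with `k` steps from the root is a sequence of `k` distinct
vertices other than the root, so there are `(n-1)(n-2)⋯(n-k)` of them and the `k`-th term
of `Z_{K_n}(c/n)` is at most `c^k`, and at least `((n-k)c/n)^k`. For `c = 1 - ε` this bounds
`Z` by the geometric series `1/ε`. For `c = 1 + ε` each of the first `K` terms is at least
`1` as soon as `K(1+ε) ≤ nε`, so `Z ≥ K` for large `n`.
-/

open Finset

namespace SimpleGraph

variable {V : Type*}

lemma isSAWFrom_top_iff {o : V} {l : List V} :
    IsSAWFrom (⊤ : SimpleGraph V) o l ↔ l.head? = some o ∧ l.Nodup := by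
  refine ⟨fun h => ⟨h.1, h.2.2⟩, fun h => ⟨h.1, ?_, h.2⟩⟩
  exact h.2.isChain.imp fun _ _ => (top_adj _ _).2

def topSAWOfEmbedding (o : V) (k : ℕ) (f : Fin k ↪ {v // v ≠ o}) :
    {l : List V // IsSAWFrom (⊤ : SimpleGraph V) o l ∧ l.length = k + 1} :=
  ⟨o :: List.ofFn (fun i => (f i : V)), isSAWFrom_top_iff.2 ⟨rfl, List.nodup_cons.2
    ⟨fun h => by obtain ⟨i, hi⟩ := List.mem_ofFn.1 h; exact (f i).2 hi,
      List.nodup_ofFn.2 (Subtype.val_injective.comp f.injective)⟩⟩, by simp⟩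

lemma topSAWOfEmbedding_bijective (o : V) (k : ℕ) :
    Function.Bijective (topSAWOfEmbedding o k) := by
  refine ⟨fun f g hfg => ?_, ?_⟩
  · have := List.ofFn_injective (List.cons_injective (Subtype.ext_iff.1 hfg))
    exact DFunLike.ext f g fun i => Subtype.ext (congrFun this i)
  · rintro ⟨l, hsaw, hlen⟩
    obtain ⟨hhead, hnd⟩ := isSAWFrom_top_iff.1 hsaw
    obtain ⟨t, rfl⟩ := List.head?_eq_some_iff.1 hhead
    obtain ⟨ho, ht⟩ := List.nodup_cons.1 hnd
    obtain rfl : t.length = k := by simpa using hlen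
    refine ⟨⟨fun i => ⟨t[i], fun h => ho (h ▸ List.getElem_mem _)⟩, fun i j hij => ?_⟩, ?_⟩
    · exact Fin.ext (ht.getElem_inj_iff.1 (Subtype.ext_iff.1 hij))
    · simp [topSAWOfEmbedding, List.ofFn_getElem]

lemma sawCount_top [Fintype V] (o : V) (k : ℕ) :
    sawCount (⊤ : SimpleGraph V) o k = (Fintype.card V - 1).descFactorial k := by
  classical
  rw [sawCount, ← Nat.card_congr (Equiv.ofBijective _ (topSAWOfEmbedding_bijective o k)),
    Nat.card_eq_fintype_card, Fintype.card_embedding_eq]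
  simp [Fintype.card_subtype_compl]

end SimpleGraph

lemma completeZ_eq {n : ℕ} (hn : 0 < n) (x : ℝ) :
    completeZ n x = ∑ k ∈ range n, ((n - 1).descFactorial k : ℝ) * x ^ k := by
  simp [completeZ, hn, sawZ, SimpleGraph.sawCount_top]

lemma completeZ_le_inv_one_sub {q : ℝ} (hq0 : 0 ≤ q) (hq1 : q < 1) (n : ℕ) :
    completeZ n (q / n) ≤ (1 - q)⁻¹ := by
  rcases Nat.eq_zero_or_pos n with rfl | hn
  · simpa [completeZ] using hq1.le
  have hterm (k : ℕ) : ((n - 1).descFactorial k : ℝ) * (q / n) ^ k ≤ q ^ k := by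
    have hfac : ((n - 1).descFactorial k : ℝ) ≤ (n : ℝ) ^ k := by
      exact_mod_cast (Nat.descFactorial_le_pow _ _).trans (Nat.pow_le_pow_left (Nat.sub_le n 1) k)
    calc ((n - 1).descFactorial k : ℝ) * (q / n) ^ k ≤ (n : ℝ) ^ k * (q / n) ^ k := by gcongr
      _ = q ^ k := by rw [← mul_pow, mul_div_cancel₀ _ (by positivity)]
  calc completeZ n (q / n) ≤ ∑ k ∈ range n, q ^ k := by
        rw [completeZ_eq hn]; exact sum_le_sum fun k _ => hterm k
    _ ≤ (1 - q)⁻¹ := by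
        have := geom_sum_Ico_le_of_lt_one (m := 0) (n := n) hq0 hq1
        rwa [← range_eq_Ico, pow_zero, one_div] at this

lemma le_of_mul_one_add_le_mul {k n : ℕ} {ε : ℝ} (hε : 0 < ε) (hk : k * (1 + ε) ≤ n * ε) :
    k ≤ n := by
  exact_mod_cast (show (k : ℝ) ≤ n by nlinarith)

lemma one_le_descFactorial_mul_pow {n k : ℕ} {ε : ℝ} (hn : 0 < n) (hε : 0 < ε)
    (hk : k * (1 + ε) ≤ n * ε) : 1 ≤ ((n - 1).descFactorial k : ℝ) * ((1 + ε) / n) ^ k := by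
  have hkn := le_of_mul_one_add_le_mul hε hk
  have hfac : ((n - k : ℕ) : ℝ) ^ k ≤ (n - 1).descFactorial k := by
    have := Nat.pow_sub_le_descFactorial (n - 1) k
    rw [show n - 1 + 1 - k = n - k by omega] at this
    exact_mod_cast this
  have hbase : 1 ≤ ((n - k : ℕ) : ℝ) * ((1 + ε) / n) := by
    rw [Nat.cast_sub hkn, ← mul_div_assoc, one_le_div (by positivity)]
    linarith
  calc 1 ≤ (((n - k : ℕ) : ℝ) * ((1 + ε) / n)) ^ k := one_le_pow₀ hbase
    _ ≤ _ := by rw [mul_pow]; gcongr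

lemma natCast_le_completeZ {n K : ℕ} {ε : ℝ} (hn : 0 < n) (hε : 0 < ε)
    (hK : K * (1 + ε) ≤ n * ε) : (K : ℝ) ≤ completeZ n ((1 + ε) / n) := by
  have hterm (k : ℕ) (hk : k ∈ range K) :
      1 ≤ ((n - 1).descFactorial k : ℝ) * ((1 + ε) / n) ^ k := by
    refine one_le_descFactorial_mul_pow hn hε (le_trans ?_ hK)
    gcongr
    exact (mem_range.1 hk).le
  rw [completeZ_eq hn]
  calc (K : ℝ) = ∑ _k ∈ range K, 1 := by simp
    _ ≤ ∑ k ∈ range K, ((n - 1).descFactorial k : ℝ) * ((1 + ε) / n) ^ k := sum_le_sum hterm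
    _ ≤ _ := sum_le_sum_of_subset_of_nonneg
        (range_subset_range.2 (le_of_mul_one_add_le_mul hε hK)) fun _ _ _ => by positivity

/-- For the complete graphs `K_n`, the sequence `x_n = 1/n` is
critical: for every `0 < ε < 1`, `Z_{K_n}((1+ε)/n) → ∞` (liminf is infinite) and
`Z_{K_n}((1-ε)/n)` stays bounded (limsup is finite). -/
theorem complete_one_over_n_critical :
    ∀ ε : ℝ, 0 < ε → ε < 1 →
      Tendsto (fun n : ℕ => completeZ n ((1 + ε) / n)) atTop atTop ∧
      BddAbove (Set.range fun n : ℕ => completeZ n ((1 - ε) / n)) := by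
  intro ε hε0 hε1
  refine ⟨tendsto_atTop.2 fun M => ?_, ⟨(1 - (1 - ε))⁻¹, ?_⟩⟩
  · obtain ⟨K, hMK⟩ := exists_nat_ge M
    filter_upwards [eventually_ge_atTop (⌈K * (1 + ε) / ε⌉₊ + 1)] with n hn
    have hK : K * (1 + ε) ≤ n * ε := by
      rw [← div_le_iff₀ hε0]
      exact (Nat.le_ceil _).trans (by exact_mod_cast (Nat.le_succ _).trans hn)
    exact hMK.trans (natCast_le_completeZ (by omega) hε0 hK)
  · rintro _ ⟨n, rfl⟩
    exact completeZ_le_inv_one_sub (by linarith) (by linarith) n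
end

section
/- Let ε > 0 and let (x_n) be a sequence of positive reals with lim_{n→∞} n·x_n = 1 + ε. Then for the complete graphs K_n, lim_{n→∞} L(x_n, K_n)/n = ε/(1+ε) and lim_{n→∞} I(x_n, K_n) = 0. -/
open Filter Topology

/-!
In `K_n` there are `(n-1)(n-2)⋯(n-k)` self-avoiding walks with `k` steps from the root, and a
pair of walks with `k` and `j` steps meeting only at the root amounts to `k + j` distinct
non-root vertices. So with the weights `w_k = (n-1)_k x^k` we get `Z = ∑ w_k`,
`L = ∑ k w_k / Z` and `I = ∑_{k,j} w_{k+j} / Z² ≤ n / Z`.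

The ratio `w_{k+1} / w_k = (n-1-k) x_n ≈ (1+ε)(1 - k/n)` is `1` at `k ≈ c n`, `c = ε/(1+ε)`.
For `k < γ n` with `γ < c` it stays above a constant `> 1`, and for `k ≥ γ n` with `γ > c`
below a constant `< 1`. Hence `Z ≥ w_{γn}` grows exponentially in `n`, which gives `I → 0`,
and the weight of `k < γ n` (resp. `k ≥ γ n`) is exponentially small compared to `Z` for
every `γ < c` (resp. `γ > c`), which gives `L / n → c`.
-/

open Finset

section Counting

variable {α : Type*}

def nodupListEquivEmbedding (P : α → Prop) (k : ℕ) :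
    {l : List α // l.Nodup ∧ l.length = k ∧ ∀ v ∈ l, P v} ≃ (Fin k ↪ {v // P v}) where
  toFun l := ⟨fun i => ⟨l.1[i.cast l.2.2.1.symm], l.2.2.2 _ (List.getElem_mem _)⟩,
    fun i j hij => by
      have := (List.Nodup.getElem_inj_iff l.2.1).mp (congrArg Subtype.val hij)
      exact Fin.ext (by simpa using this)⟩
  invFun f := ⟨List.ofFn fun i => (f i).1,
    List.nodup_ofFn.mpr (Subtype.val_injective.comp f.injective), List.length_ofFn,
    by simp only [List.mem_ofFn, forall_exists_index]; rintro _ i rfl; exact (f i).2⟩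
  left_inv l := Subtype.ext <| List.ext_getElem (by simp [l.2.2.1]) (by simp)
  right_inv f := by ext; simp

theorem card_nodup_list_of_length (P : α → Prop) [Fintype {v // P v}] (k : ℕ) :
    Nat.card {l : List α // l.Nodup ∧ l.length = k ∧ ∀ v ∈ l, P v} =
      (Fintype.card {v // P v}).descFactorial k := by
  rw [Nat.card_congr (nodupListEquivEmbedding P k), Nat.card_eq_fintype_card,
    Fintype.card_embedding_eq, Fintype.card_fin]

theorem isSAWFrom_top_cons_iff {o u : α} {l : List α} :
    IsSAWFrom (⊤ : SimpleGraph α) o (u :: l) ↔ u = o ∧ o ∉ l ∧ l.Nodup := by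
  simp only [IsSAWFrom, List.head?_cons, Option.some.injEq, List.nodup_cons]
  constructor
  · rintro ⟨rfl, -, h⟩
    exact ⟨rfl, h⟩
  · rintro ⟨rfl, h⟩
    refine ⟨rfl, ?_, h⟩
    exact (List.nodup_cons.mpr h).isChain.imp fun _ _ hne => hne

def sawTopEquiv (o : α) (Q : List α → Prop) :
    {l : List α // IsSAWFrom (⊤ : SimpleGraph α) o l ∧ Q l} ≃
      {l : List α // (o ∉ l ∧ l.Nodup) ∧ Q (o :: l)} where
  toFun l := ⟨l.1.tail, by
    obtain ⟨_ | ⟨u, l⟩, hsaw, hQ⟩ := l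
    · exact absurd hsaw.1 (by simp)
    · obtain ⟨rfl, h⟩ := isSAWFrom_top_cons_iff.mp hsaw
      exact ⟨h, hQ⟩⟩
  invFun l := ⟨o :: l.1, isSAWFrom_top_cons_iff.mpr ⟨rfl, l.2.1⟩, l.2.2⟩
  left_inv := by
    rintro ⟨_ | ⟨u, l⟩, hsaw, hQ⟩
    · exact absurd hsaw.1 (by simp)
    · obtain rfl := (isSAWFrom_top_cons_iff.mp hsaw).1
      rfl
  right_inv _ := rfl

def subtypeProdAndEquivSigma {β : Type*} (A : α → Prop) (B : α → β → Prop) :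
    {p : α × β // A p.1 ∧ B p.1 p.2} ≃ Σ a : {a // A a}, {b // B a b} where
  toFun p := ⟨⟨p.1.1, p.2.1⟩, ⟨p.1.2, p.2.2⟩⟩
  invFun q := ⟨(q.1.1, q.2.1), q.1.2, q.2.2⟩

variable [Fintype α] [DecidableEq α]

theorem card_subtype_notMem_list {l : List α} (hl : l.Nodup) :
    Fintype.card {v // v ∉ l} = Fintype.card α - l.length := by
  rw [Fintype.card_subtype_compl, ← List.toFinset_card_of_nodup hl,
    ← Fintype.card_coe l.toFinset]
  simp only [List.mem_toFinset]

theorem sawCount_top (o : α) (k : ℕ) :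
    sawCount (⊤ : SimpleGraph α) o k = (Fintype.card α - 1).descFactorial k := by
  have hcard : Fintype.card α - 1 = Fintype.card {v // v ∉ [o]} :=
    (card_subtype_notMem_list (List.nodup_singleton o)).symm
  rw [sawCount, Nat.card_congr (sawTopEquiv o (fun l => l.length = k + 1)), hcard,
    ← card_nodup_list_of_length]
  refine Nat.card_congr (Equiv.subtypeEquivRight fun l => ?_)
  simp only [List.length_cons, List.mem_singleton]
  grind

noncomputable def sawTopTrivialIntersectionEquiv {o : α} {k : ℕ} (l₁ : List α)
    (hl₁ : IsSAWFrom ⊤ o l₁ ∧ l₁.length = k + 1) (j : ℕ) :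
    {l // (IsSAWFrom ⊤ o l ∧ l.length = j + 1) ∧ {v | v ∈ l₁ ∧ v ∈ l} = {o}} ≃
      (Fin j ↪ Fin (Fintype.card α - 1 - k)) := by
  have ho : o ∈ l₁ := List.mem_of_mem_head? hl₁.1.1
  refine (Equiv.subtypeEquivRight fun _ => and_assoc).trans <| (sawTopEquiv o _).trans <|
    (Equiv.subtypeEquivRight fun l => ?_).trans <|
    (nodupListEquivEmbedding (· ∉ l₁) j).trans <|
    Equiv.embeddingCongr (Equiv.refl _) (Fintype.equivFinOfCardEq ?_)
  · simp only [List.length_cons, Set.ext_iff, Set.mem_ofPred_eq, List.mem_cons,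
      Set.mem_singleton_iff]
    grind
  · rw [card_subtype_notMem_list hl₁.1.2.2, hl₁.2, Nat.sub_sub, Nat.add_comm]

theorem sawPairCount_top (o : α) (k j : ℕ) :
    sawPairCount (⊤ : SimpleGraph α) o k j = (Fintype.card α - 1).descFactorial (k + j) := by
  rw [sawPairCount, Nat.card_congr ((subtypeProdAndEquivSigma
      (fun l => IsSAWFrom ⊤ o l ∧ l.length = k + 1)
      fun l₁ l => (IsSAWFrom ⊤ o l ∧ l.length = j + 1) ∧ {v | v ∈ l₁ ∧ v ∈ l} = {o}).trans <|
      (Equiv.sigmaCongrRight fun (l₁ : {l // IsSAWFrom ⊤ o l ∧ l.length = k + 1}) =>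
        sawTopTrivialIntersectionEquiv l₁.1 l₁.2 j).trans <|
      Equiv.sigmaEquivProd _ _),
    Nat.card_prod, ← sawCount, sawCount_top, Nat.card_eq_fintype_card,
    Fintype.card_embedding_eq, Fintype.card_fin, Fintype.card_fin, mul_comm,
    ← Nat.descFactorial_mul_descFactorial (Nat.le_add_right k j), Nat.add_sub_cancel_left]

end Counting

section GeometricBounds

variable {t : ℕ → ℝ} {q : ℝ}

theorem le_pow_mul_of_le_mul_succ (hq : 0 ≤ q) {k m : ℕ} (hkm : k ≤ m)
    (h : ∀ i, k ≤ i → i < m → t i ≤ q * t (i + 1)) : t k ≤ q ^ (m - k) * t m := by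
  have := le_geom (u := fun i => t (m - i)) hq (m - k) fun i hi => by
    simpa [show m - i = m - (i + 1) + 1 by omega] using h (m - (i + 1)) (by omega) (by omega)
  simpa [Nat.sub_sub_self hkm] using this

theorem le_pow_mul_of_succ_le_mul (hq : 0 ≤ q) {m K : ℕ} (hmK : m ≤ K)
    (h : ∀ i, m ≤ i → t (i + 1) ≤ q * t i) : t K ≤ q ^ (K - m) * t m := by
  have := le_geom (u := fun i => t (m + i)) hq (K - m) fun i _ => h (m + i) (by omega)
  simpa [Nat.add_sub_cancel' hmK] using this

theorem sum_range_le_of_le_mul_succ (hq0 : 0 ≤ q) (hq1 : q < 1) (ht : 0 ≤ t 0) {K : ℕ}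
    (h : ∀ k < K, t k ≤ q * t (k + 1)) : ∑ k ∈ range K, t k ≤ q / (1 - q) * t K := by
  induction K with
  | zero => simpa using mul_nonneg (div_nonneg hq0 (sub_nonneg.2 hq1.le)) ht
  | succ K ih =>
    have hpos : 0 < 1 - q := sub_pos.2 hq1
    calc ∑ k ∈ range (K + 1), t k ≤ q / (1 - q) * t K + t K :=
          by rw [sum_range_succ]; gcongr; exact ih fun k hk => h k (by omega)
      _ = t K / (1 - q) := by field_simp; ring
      _ ≤ q * t (K + 1) / (1 - q) := by gcongr; exact h K (by omega)
      _ = q / (1 - q) * t (K + 1) := by ring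

theorem sum_Ico_le_of_succ_le_mul (hq0 : 0 ≤ q) (hq1 : q < 1) {K : ℕ} (ht : 0 ≤ t K)
    (h : ∀ k, K ≤ k → t (k + 1) ≤ q * t k) (N : ℕ) :
    ∑ k ∈ Ico K N, t k ≤ t K / (1 - q) := by
  calc ∑ k ∈ Ico K N, t k = ∑ i ∈ range (N - K), t (K + i) := sum_Ico_eq_sum_range t K N
    _ ≤ ∑ i ∈ range (N - K), q ^ i * t K := by
        gcongr with i
        simpa using le_pow_mul_of_succ_le_mul hq0 (Nat.le_add_right K i) h
    _ = (∑ i ∈ Ico 0 (N - K), q ^ i) * t K := by rw [sum_mul, range_eq_Ico]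
    _ ≤ q ^ 0 / (1 - q) * t K := by gcongr; exact geom_sum_Ico_le_of_lt_one hq0 hq1
    _ = t K / (1 - q) := by ring

end GeometricBounds

section Moments

variable {t : ℕ → ℝ} {K N : ℕ}

theorem natCast_mul_sub_le_sum_range_mul (ht : ∀ k, 0 ≤ t k) (hKN : K ≤ N) :
    K * (∑ k ∈ range N, t k - ∑ k ∈ range K, t k) ≤ ∑ k ∈ range N, k * t k := by
  calc (K : ℝ) * (∑ k ∈ range N, t k - ∑ k ∈ range K, t k)
      = ∑ k ∈ Ico K N, K * t k := by rw [← sum_Ico_eq_sub _ hKN, mul_sum]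
    _ ≤ ∑ k ∈ Ico K N, k * t k := by
        gcongr with k hk
        · exact ht k
        · exact_mod_cast (mem_Ico.1 hk).1
    _ ≤ ∑ k ∈ range N, k * t k :=
        sum_le_sum_of_subset_of_nonneg (range_eq_Ico N ▸ Ico_subset_Ico_left K.zero_le)
          fun k _ _ => mul_nonneg k.cast_nonneg (ht k)

theorem sum_range_mul_le (ht : ∀ k, 0 ≤ t k) (hKN : K ≤ N) :
    ∑ k ∈ range N, k * t k ≤ K * ∑ k ∈ range N, t k + N * ∑ k ∈ Ico K N, t k := by
  rw [← sum_range_add_sum_Ico _ hKN, ← sum_range_add_sum_Ico _ hKN, mul_add]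
  gcongr ?_ + ?_
  · calc ∑ k ∈ range K, k * t k ≤ ∑ k ∈ range K, K * t k := by
          gcongr with k hk
          · exact ht k
          · exact_mod_cast (mem_range.1 hk).le
      _ ≤ _ := by
          rw [← mul_sum]
          have := sum_nonneg fun k (_ : k ∈ Ico K N) => ht k
          nlinarith [K.cast_nonneg (α := ℝ)]
  · rw [mul_sum]
    gcongr with k hk
    · exact ht k
    · exact_mod_cast (mem_Ico.1 hk).2.le

end Moments

section CompleteGraph

noncomputable def completeWeight (n : ℕ) (x : ℝ) (k : ℕ) : ℝ :=
  ((n - 1).descFactorial k : ℝ) * x ^ k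

variable {n : ℕ} {x : ℝ}

@[simp]
theorem completeWeight_zero : completeWeight n x 0 = 1 := by
  simp [completeWeight]

theorem completeWeight_succ (k : ℕ) :
    completeWeight n x (k + 1) = ((n - 1 - k : ℕ) : ℝ) * x * completeWeight n x k := by
  simp only [completeWeight, Nat.descFactorial_succ, Nat.cast_mul, pow_succ]
  ring

theorem completeWeight_nonneg (hx : 0 ≤ x) (k : ℕ) : 0 ≤ completeWeight n x k := by
  unfold completeWeight
  positivity

theorem completeWeight_eq_zero {k : ℕ} (hk : n - 1 < k) : completeWeight n x k = 0 := by
  simp [completeWeight, Nat.descFactorial_eq_zero_iff_lt.2 hk]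

theorem completeZ_eq_sum (hn : 0 < n) :
    completeZ n x = ∑ k ∈ range n, completeWeight n x k := by
  simp [completeZ, hn, sawZ, sawCount_top, completeWeight]

theorem completeZ_pos (hn : 0 < n) (hx : 0 ≤ x) : 0 < completeZ n x := by
  rw [completeZ_eq_sum hn]
  exact sum_pos' (fun k _ => completeWeight_nonneg hx k) ⟨0, mem_range.2 hn, by simp⟩

theorem completeWeight_le_completeZ {m : ℕ} (hm : m < n) (hx : 0 ≤ x) :
    completeWeight n x m ≤ completeZ n x := by
  rw [completeZ_eq_sum (by omega)]
  exact single_le_sum (fun k _ => completeWeight_nonneg hx k) (mem_range.2 hm)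

theorem completeL_eq (hn : 0 < n) :
    completeL n x = (∑ k ∈ range n, k * completeWeight n x k) / completeZ n x := by
  simp [completeL, hn, sawL, sawCount_top, completeWeight, completeZ, div_eq_inv_mul, mul_assoc]

theorem completeI_eq (hn : 0 < n) :
    completeI n x = (∑ k ∈ range n, ∑ j ∈ range n, completeWeight n x (k + j)) /
      completeZ n x ^ 2 := by
  simp [completeI, hn, sawI, sawPairCount_top, completeWeight, completeZ, div_eq_inv_mul]

theorem sum_range_completeWeight_add_le (hn : 0 < n) (hx : 0 ≤ x) (k : ℕ) :
    ∑ j ∈ range n, completeWeight n x (k + j) ≤ completeZ n x := by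
  have hvanish : ∑ i ∈ range k, completeWeight n x (n + i) = 0 :=
    sum_eq_zero fun i _ => completeWeight_eq_zero (by omega)
  calc ∑ j ∈ range n, completeWeight n x (k + j)
      ≤ ∑ i ∈ range k, completeWeight n x i + ∑ j ∈ range n, completeWeight n x (k + j) :=
        le_add_of_nonneg_left (sum_nonneg fun i _ => completeWeight_nonneg hx i)
    _ = ∑ i ∈ range n, completeWeight n x i +
          ∑ i ∈ range k, completeWeight n x (n + i) := by
        rw [← sum_range_add, ← sum_range_add, add_comm]
    _ = completeZ n x := by rw [hvanish, add_zero, completeZ_eq_sum hn]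

theorem completeI_nonneg (hx : 0 ≤ x) : 0 ≤ completeI n x := by
  rcases Nat.eq_zero_or_pos n with rfl | hn
  · simp [completeI]
  rw [completeI_eq hn]
  exact div_nonneg (sum_nonneg fun k _ => sum_nonneg fun j _ => completeWeight_nonneg hx _)
    (sq_nonneg _)

theorem completeI_le (hn : 0 < n) (hx : 0 ≤ x) : completeI n x ≤ n / completeZ n x := by
  have hZ := completeZ_pos hn hx
  rw [completeI_eq hn, div_le_div_iff₀ (by positivity) hZ]
  calc (∑ k ∈ range n, ∑ j ∈ range n, completeWeight n x (k + j)) * completeZ n x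
      ≤ (∑ k ∈ range n, completeZ n x) * completeZ n x := by
        gcongr with k
        exact sum_range_completeWeight_add_le hn hx k
    _ = n * completeZ n x ^ 2 := by rw [sum_const, card_range, nsmul_eq_mul]; ring

theorem completeL_div_ge (hn : 0 < n) (hx : 0 ≤ x) {γ : ℝ} (hγ1 : γ ≤ 1) :
    γ * (1 - (∑ k ∈ range ⌈γ * n⌉₊, completeWeight n x k) / completeZ n x) ≤
      completeL n x / n := by
  have hKn : ⌈γ * n⌉₊ ≤ n := Nat.ceil_le.2 (mul_le_of_le_one_left n.cast_nonneg hγ1)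
  have hZ := completeZ_pos hn hx
  have hHZ : ∑ k ∈ range ⌈γ * n⌉₊, completeWeight n x k ≤ completeZ n x := by
    rw [completeZ_eq_sum hn]
    exact sum_le_sum_of_subset_of_nonneg (range_subset_range.2 hKn)
      fun k _ _ => completeWeight_nonneg hx k
  rw [completeL_eq hn, div_div, le_div_iff₀ (by positivity)]
  calc γ * (1 - (∑ k ∈ range ⌈γ * n⌉₊, completeWeight n x k) / completeZ n x) *
        (completeZ n x * n)
      = γ * n * (completeZ n x - ∑ k ∈ range ⌈γ * n⌉₊, completeWeight n x k) := by
        field_simp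
    _ ≤ ⌈γ * n⌉₊ * (completeZ n x - ∑ k ∈ range ⌈γ * n⌉₊, completeWeight n x k) := by
        gcongr
        exact Nat.le_ceil _
    _ ≤ _ := by
        rw [completeZ_eq_sum hn]
        exact natCast_mul_sub_le_sum_range_mul (completeWeight_nonneg hx) hKn

theorem completeL_div_le (hn : 0 < n) (hx : 0 ≤ x) {γ : ℝ} (hγ0 : 0 ≤ γ) (hγ1 : γ ≤ 1) :
    completeL n x / n ≤
      γ + 1 / n + (∑ k ∈ Ico ⌈γ * n⌉₊ n, completeWeight n x k) / completeZ n x := by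
  have hKn : ⌈γ * n⌉₊ ≤ n := Nat.ceil_le.2 (mul_le_of_le_one_left n.cast_nonneg hγ1)
  have hZ := completeZ_pos hn hx
  have hK : (⌈γ * n⌉₊ : ℝ) < γ * n + 1 := Nat.ceil_lt_add_one (by positivity)
  rw [completeL_eq hn, div_div, div_le_iff₀ (by positivity)]
  calc ∑ k ∈ range n, k * completeWeight n x k
      ≤ ⌈γ * n⌉₊ * completeZ n x + n * ∑ k ∈ Ico ⌈γ * n⌉₊ n, completeWeight n x k := by
        rw [completeZ_eq_sum hn]
        exact sum_range_mul_le (completeWeight_nonneg hx) hKn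
    _ ≤ (γ * n + 1) * completeZ n x + n * ∑ k ∈ Ico ⌈γ * n⌉₊ n, completeWeight n x k := by
        gcongr
    _ = _ := by field_simp

end CompleteGraph

section Asymptotics

theorem sub_le_natCast_sub (a b : ℕ) : (a : ℝ) - b ≤ ((a - b : ℕ) : ℝ) := by
  rcases le_total b a with h | h
  · rw [Nat.cast_sub h]
  · rw [Nat.sub_eq_zero_of_le h, Nat.cast_zero, sub_nonpos]
    exact_mod_cast h

theorem tendsto_ceil_mul_sub_ceil_mul {a b : ℝ} (ha : 0 ≤ a) (hab : a < b) :
    Tendsto (fun n : ℕ => ⌈b * n⌉₊ - ⌈a * n⌉₊) atTop atTop := by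
  rw [← tendsto_natCast_atTop_iff (R := ℝ)]
  refine tendsto_atTop_mono (fun n => ?_) <| tendsto_atTop_add_const_right _ (-1) <|
    tendsto_natCast_atTop_atTop.const_mul_atTop (sub_pos.2 hab)
  have hb : b * n ≤ ⌈b * n⌉₊ := Nat.le_ceil _
  have ha' : (⌈a * n⌉₊ : ℝ) < a * n + 1 := Nat.ceil_lt_add_one (by positivity)
  linarith [sub_le_natCast_sub ⌈b * n⌉₊ ⌈a * n⌉₊]

theorem eventually_ceil_mul_lt {γ : ℝ} (hγ0 : 0 ≤ γ) (hγ1 : γ < 1) :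
    ∀ᶠ n : ℕ in atTop, ⌈γ * n⌉₊ < n := by
  filter_upwards [(tendsto_natCast_atTop_atTop.const_mul_atTop (sub_pos.2 hγ1)).eventually_gt_atTop
    1] with n hn
  have : (⌈γ * n⌉₊ : ℝ) < γ * n + 1 := Nat.ceil_lt_add_one (by positivity)
  exact_mod_cast (by linarith : (⌈γ * n⌉₊ : ℝ) < n)

variable {a : ℝ} {x : ℕ → ℝ}

theorem tendsto_zero_of_tendsto_natCast_mul
    (hlim : Tendsto (fun n : ℕ => (n : ℝ) * x n) atTop (𝓝 a)) : Tendsto x atTop (𝓝 0) :=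
  (hlim.div_atTop tendsto_natCast_atTop_atTop).congr' <|
    (eventually_ne_atTop 0).mono fun n hn => by field_simp

theorem eventually_completeWeight_le_mul_succ (ha : 0 < a) (hx : ∀ n, 0 < x n)
    (hlim : Tendsto (fun n : ℕ => (n : ℝ) * x n) atTop (𝓝 a)) {γ : ℝ}
    (hγ : γ < 1 - a⁻¹) :
    ∃ q, 0 < q ∧ q < 1 ∧ ∀ᶠ n : ℕ in atTop, ∀ k : ℕ, (k : ℝ) < γ * n →
      completeWeight n (x n) k ≤ q * completeWeight n (x n) (k + 1) := by
  have h1 : 1 < (1 - γ) * a :=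
    calc 1 = a⁻¹ * a := (inv_mul_cancel₀ ha.ne').symm
      _ < (1 - γ) * a := by gcongr; linarith
  obtain ⟨ρ, hρ, hρa⟩ := exists_between h1
  have hratio :
      Tendsto (fun n : ℕ => (1 - γ) * (n * x n) - x n) atTop (𝓝 ((1 - γ) * a)) := by
    simpa using (hlim.const_mul (1 - γ)).sub (tendsto_zero_of_tendsto_natCast_mul hlim)
  refine ⟨ρ⁻¹, by positivity, inv_lt_one_of_one_lt₀ hρ, ?_⟩
  filter_upwards [hratio.eventually_const_lt hρa] with n hn k hk
  have hcast : (n : ℝ) - (1 + k) ≤ ((n - 1 - k : ℕ) : ℝ) := by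
    simpa [Nat.sub_sub] using sub_le_natCast_sub n (1 + k)
  have hr : ρ ≤ ((n - 1 - k : ℕ) : ℝ) * x n :=
    calc ρ ≤ (1 - γ) * (n * x n) - x n := hn.le
      _ ≤ (n - (1 + k)) * x n := by linarith [mul_le_mul_of_nonneg_right hk.le (hx n).le]
      _ ≤ ((n - 1 - k : ℕ) : ℝ) * x n := by gcongr; exact (hx n).le
  rw [completeWeight_succ, ← div_eq_inv_mul, le_div_iff₀ (by positivity), mul_comm]
  exact mul_le_mul_of_nonneg_right hr (completeWeight_nonneg (hx n).le k)

theorem eventually_completeWeight_succ_le_mul (ha : 0 < a) (hx : ∀ n, 0 < x n)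
    (hlim : Tendsto (fun n : ℕ => (n : ℝ) * x n) atTop (𝓝 a)) {γ : ℝ}
    (hγ : 1 - a⁻¹ < γ) (hγ1 : γ ≤ 1) :
    ∃ q, 0 ≤ q ∧ q < 1 ∧ ∀ᶠ n : ℕ in atTop, ∀ k : ℕ, γ * n ≤ k →
      completeWeight n (x n) (k + 1) ≤ q * completeWeight n (x n) k := by
  have h1 : (1 - γ) * a < 1 :=
    calc (1 - γ) * a < a⁻¹ * a := by gcongr; linarith
      _ = 1 := inv_mul_cancel₀ ha.ne'
  obtain ⟨q, hq, hq1⟩ := exists_between h1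
  refine ⟨q, (mul_nonneg (sub_nonneg.2 hγ1) ha.le).trans hq.le, hq1, ?_⟩
  filter_upwards [(hlim.const_mul (1 - γ)).eventually_lt_const hq] with n hn k hk
  have hcast : ((n - 1 - k : ℕ) : ℝ) ≤ (1 - γ) * n := by
    rcases le_or_gt (1 + k) n with h | h
    · rw [Nat.sub_sub, Nat.cast_sub h]
      push_cast
      linarith
    · rw [Nat.sub_sub, Nat.sub_eq_zero_of_le h.le, Nat.cast_zero]
      exact mul_nonneg (sub_nonneg.2 hγ1) n.cast_nonneg
  have hr : ((n - 1 - k : ℕ) : ℝ) * x n ≤ q :=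
    calc ((n - 1 - k : ℕ) : ℝ) * x n ≤ (1 - γ) * n * x n := by gcongr; exact (hx n).le
      _ ≤ q := by rw [mul_assoc]; exact hn.le
  rw [completeWeight_succ]
  exact mul_le_mul_of_nonneg_right hr (completeWeight_nonneg (hx n).le k)

theorem tendsto_head_div_completeZ (ha : 0 < a) (hx : ∀ n, 0 < x n)
    (hlim : Tendsto (fun n : ℕ => (n : ℝ) * x n) atTop (𝓝 a)) {γ : ℝ} (hγ0 : 0 ≤ γ)
    (hγ : γ < 1 - a⁻¹) :
    Tendsto (fun n : ℕ =>
      (∑ k ∈ range ⌈γ * n⌉₊, completeWeight n (x n) k) / completeZ n (x n)) atTop (𝓝 0) := by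
  obtain ⟨γ', hγγ', hγ'⟩ := exists_between hγ
  obtain ⟨q, hq0, hq1, hgrowth⟩ := eventually_completeWeight_le_mul_succ ha hx hlim hγ'
  have hγ'1 : γ' < 1 := hγ'.trans (sub_lt_self 1 (inv_pos.2 ha))
  have hbound :
      Tendsto (fun n : ℕ => q / (1 - q) * q ^ (⌈γ' * n⌉₊ - ⌈γ * n⌉₊)) atTop (𝓝 0) := by
    simpa using ((tendsto_pow_atTop_nhds_zero_of_lt_one hq0.le hq1).comp
      (tendsto_ceil_mul_sub_ceil_mul hγ0 hγγ')).const_mul (q / (1 - q))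
  refine squeeze_zero' ?_ ?_ hbound
  · filter_upwards [eventually_gt_atTop 0] with n hn
    exact div_nonneg (sum_nonneg fun k _ => completeWeight_nonneg (hx n).le k)
      (completeZ_pos hn (hx n).le).le
  filter_upwards [hgrowth, eventually_ceil_mul_lt (hγ0.trans hγγ'.le) hγ'1] with n hn hmn
  have hKm : ⌈γ * n⌉₊ ≤ ⌈γ' * n⌉₊ := Nat.ceil_mono (by gcongr)
  have hlt : ∀ i < ⌈γ' * n⌉₊, (i : ℝ) < γ' * n := fun i => Nat.lt_ceil.1
  have hZ := completeZ_pos (n := n) (by omega) (hx n).le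
  rw [div_le_iff₀ hZ]
  calc ∑ k ∈ range ⌈γ * n⌉₊, completeWeight n (x n) k
      ≤ q / (1 - q) * completeWeight n (x n) ⌈γ * n⌉₊ :=
        sum_range_le_of_le_mul_succ hq0.le hq1 (by simp)
          fun k hk => hn k (hlt k (hk.trans_le hKm))
    _ ≤ q / (1 - q) *
          (q ^ (⌈γ' * n⌉₊ - ⌈γ * n⌉₊) * completeWeight n (x n) ⌈γ' * n⌉₊) := by
        gcongr
        exact le_pow_mul_of_le_mul_succ hq0.le hKm fun i _ hi => hn i (hlt i hi)
    _ ≤ q / (1 - q) * (q ^ (⌈γ' * n⌉₊ - ⌈γ * n⌉₊) * completeZ n (x n)) := by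
        gcongr
        exact completeWeight_le_completeZ hmn (hx n).le
    _ = _ := by ring

theorem tendsto_tail_div_completeZ (ha : 1 < a) (hx : ∀ n, 0 < x n)
    (hlim : Tendsto (fun n : ℕ => (n : ℝ) * x n) atTop (𝓝 a)) {γ : ℝ}
    (hγ : 1 - a⁻¹ < γ)
    (hγ1 : γ ≤ 1) :
    Tendsto (fun n : ℕ =>
      (∑ k ∈ Ico ⌈γ * n⌉₊ n, completeWeight n (x n) k) / completeZ n (x n)) atTop (𝓝 0) := by
  obtain ⟨γ', hγ', hγ'γ⟩ := exists_between hγ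
  obtain ⟨q, hq0, hq1, hdecay⟩ :=
    eventually_completeWeight_succ_le_mul (by linarith) hx hlim hγ' (hγ'γ.le.trans hγ1)
  have hγ'0 : 0 ≤ γ' := le_of_lt <| (sub_pos.2 (inv_lt_one_of_one_lt₀ ha)).trans hγ'
  have hbound :
      Tendsto (fun n : ℕ => 1 / (1 - q) * q ^ (⌈γ * n⌉₊ - ⌈γ' * n⌉₊)) atTop (𝓝 0) := by
    simpa using ((tendsto_pow_atTop_nhds_zero_of_lt_one hq0 hq1).comp
      (tendsto_ceil_mul_sub_ceil_mul hγ'0 hγ'γ)).const_mul (1 / (1 - q))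
  refine squeeze_zero' ?_ ?_ hbound
  · filter_upwards [eventually_gt_atTop 0] with n hn
    exact div_nonneg (sum_nonneg fun k _ => completeWeight_nonneg (hx n).le k)
      (completeZ_pos hn (hx n).le).le
  filter_upwards [hdecay, eventually_ceil_mul_lt hγ'0 (hγ'γ.trans_le hγ1)] with n hn hmn
  have hmK : ⌈γ' * n⌉₊ ≤ ⌈γ * n⌉₊ := Nat.ceil_mono (by gcongr)
  have hge : ∀ i, ⌈γ' * n⌉₊ ≤ i → γ' * n ≤ i := fun i => Nat.ceil_le.1
  have hZ := completeZ_pos (n := n) (by omega) (hx n).le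
  rw [div_le_iff₀ hZ]
  calc ∑ k ∈ Ico ⌈γ * n⌉₊ n, completeWeight n (x n) k
      ≤ completeWeight n (x n) ⌈γ * n⌉₊ / (1 - q) :=
        sum_Ico_le_of_succ_le_mul hq0 hq1 (completeWeight_nonneg (hx n).le _)
          (fun k hk => hn k (hge k (hmK.trans hk))) n
    _ ≤ q ^ (⌈γ * n⌉₊ - ⌈γ' * n⌉₊) *
          completeWeight n (x n) ⌈γ' * n⌉₊ / (1 - q) := by
        gcongr
        exact le_pow_mul_of_succ_le_mul hq0 hmK fun i hi => hn i (hge i hi)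
    _ ≤ q ^ (⌈γ * n⌉₊ - ⌈γ' * n⌉₊) * completeZ n (x n) / (1 - q) := by
        gcongr
        exact completeWeight_le_completeZ hmn (hx n).le
    _ = _ := by ring


variable {a : ℝ} {x : ℕ → ℝ}

theorem tendsto_completeL_div (ha : 1 < a) (hx : ∀ n, 0 < x n)
    (hlim : Tendsto (fun n : ℕ => (n : ℝ) * x n) atTop (𝓝 a)) :
    Tendsto (fun n : ℕ => completeL n (x n) / n) atTop (𝓝 (1 - a⁻¹)) := by
  have hc : 0 < 1 - a⁻¹ := sub_pos.2 (inv_lt_one_of_one_lt₀ ha)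
  refine tendsto_order.2 ⟨fun b hb => ?_, fun b hb => ?_⟩
  · obtain ⟨γ, hbγ, hγ⟩ := exists_between (max_lt hb hc)
    have hγ0 : 0 ≤ γ := (le_max_right b 0).trans hbγ.le
    have hγ1 : γ ≤ 1 := hγ.le.trans (sub_le_self 1 (inv_nonneg.2 (by linarith)))
    have hlow :=
      ((tendsto_head_div_completeZ (by linarith) hx hlim hγ0 hγ).const_sub 1).const_mul γ
    rw [sub_zero, mul_one] at hlow
    filter_upwards [hlow.eventually_const_lt ((le_max_left b 0).trans_lt hbγ),
      eventually_gt_atTop 0] with n hbn hn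
    exact hbn.trans_le (completeL_div_ge hn (hx n).le hγ1)
  · obtain ⟨γ, hγ, hγb⟩ :=
      exists_between (lt_min hb (sub_lt_self 1 (inv_pos.2 (by linarith))))
    have hγ0 : 0 ≤ γ := hc.le.trans hγ.le
    have hγ1 : γ ≤ 1 := hγb.le.trans (min_le_right b 1)
    have hup := ((tendsto_one_div_atTop_nhds_zero_nat (𝕜 := ℝ)).const_add γ).add
      (tendsto_tail_div_completeZ ha hx hlim hγ hγ1)
    rw [add_zero, add_zero] at hup
    filter_upwards [hup.eventually_lt_const (hγb.trans_le (min_le_left b 1)),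
      eventually_gt_atTop 0] with n hbn hn
    exact (completeL_div_le hn (hx n).le hγ0 hγ1).trans_lt hbn

theorem tendsto_completeI (ha : 1 < a) (hx : ∀ n, 0 < x n)
    (hlim : Tendsto (fun n : ℕ => (n : ℝ) * x n) atTop (𝓝 a)) :
    Tendsto (fun n : ℕ => completeI n (x n)) atTop (𝓝 0) := by
  have hc : 0 < 1 - a⁻¹ := sub_pos.2 (inv_lt_one_of_one_lt₀ ha)
  obtain ⟨γ, hγ0, hγ⟩ := exists_between hc
  obtain ⟨q, hq0, hq1, hgrowth⟩ :=
    eventually_completeWeight_le_mul_succ (by linarith) hx hlim hγ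
  have hγ1 : γ < 1 := hγ.trans (sub_lt_self 1 (inv_pos.2 (by linarith)))
  refine squeeze_zero' (Eventually.of_forall fun n => completeI_nonneg (hx n).le) ?_
    (tendsto_self_mul_const_pow_of_lt_one (Real.rpow_nonneg hq0.le γ)
      (Real.rpow_lt_one hq0.le hq1 hγ0))
  filter_upwards [hgrowth, eventually_ceil_mul_lt hγ0.le hγ1] with n hn hmn
  have hZ := completeZ_pos (n := n) (by omega) (hx n).le
  have hZ1 : 1 ≤ q ^ ⌈γ * n⌉₊ * completeZ n (x n) := by
    calc (1 : ℝ) = completeWeight n (x n) 0 := completeWeight_zero.symm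
      _ ≤ q ^ ⌈γ * n⌉₊ * completeWeight n (x n) ⌈γ * n⌉₊ := by
        simpa using le_pow_mul_of_le_mul_succ hq0.le (Nat.zero_le _)
          fun i _ hi => hn i (Nat.lt_ceil.1 hi)
      _ ≤ q ^ ⌈γ * n⌉₊ * completeZ n (x n) := by
        gcongr
        exact completeWeight_le_completeZ hmn (hx n).le
  have hpow : q ^ ⌈γ * n⌉₊ ≤ (q ^ γ) ^ n := by
    rw [← Real.rpow_natCast, ← Real.rpow_natCast, ← Real.rpow_mul hq0.le]
    exact Real.rpow_le_rpow_of_exponent_ge hq0 hq1.le (Nat.le_ceil _)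
  calc completeI n (x n) ≤ n / completeZ n (x n) := completeI_le (by omega) (hx n).le
    _ ≤ n * q ^ ⌈γ * n⌉₊ := by
        rw [div_le_iff₀ hZ, mul_assoc]
        exact le_mul_of_one_le_right n.cast_nonneg hZ1
    _ ≤ n * (q ^ γ) ^ n := by gcongr

end Asymptotics

/-- If `ε > 0` and `n · x_n → 1 + ε`, then for the complete graphs
`K_n`, `L(x_n, K_n)/n → ε/(1+ε)` and `I(x_n, K_n) → 0`. -/
theorem complete_superCritical_length_and_intersection (ε : ℝ) (hε : 0 < ε)
    (x : ℕ → ℝ) (hx : ∀ n, 0 < x n)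
    (hlim : Tendsto (fun n : ℕ => (n : ℝ) * x n) atTop (𝓝 (1 + ε))) :
    Tendsto (fun n : ℕ => completeL n (x n) / n) atTop (𝓝 (ε / (1 + ε))) ∧
    Tendsto (fun n : ℕ => completeI n (x n)) atTop (𝓝 0) := by
  have ha : 1 < 1 + ε := by linarith
  have hc : ε / (1 + ε) = 1 - (1 + ε)⁻¹ := by field_simp; ring
  exact ⟨hc ▸ tendsto_completeL_div ha hx hlim, tendsto_completeI ha hx hlim⟩
end

section
/- Let ε > 0 and let (x_n) be a sequence of positive reals with lim_{n→∞} n·x_n = 1 + ε. Then for the complete graphs K_n, lim_{n→∞} γ(x_n, K_n) = ∞. -/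
open Filter Topology

section Aux

lemma sawFinite {V : Type*} [Finite V] (G : SimpleGraph V) (o : V) (k : ℕ) :
    Finite {l : List V // IsSAWFrom G o l ∧ l.length = k + 1} := by
  apply Finite.of_injective
    (fun l => (fun i : Fin (k+1) => l.1.get (Fin.cast l.2.2.symm i) : Fin (k+1) → V))
  rintro ⟨l, hl⟩ ⟨l', hl'⟩ h
  ext1
  refine List.ext_get (by rw [hl.2, hl'.2]) fun i h1 h2 => ?_
  have := congrFun h ⟨i, by rw [hl.2] at h1; omega⟩
  simpa [Fin.cast] using this

lemma sawCount_ge (m k : ℕ) (hk : k ≤ m) (o : Fin (m+1)) :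
    (m + 1 - k) ^ k ≤ sawCount (⊤ : SimpleGraph (Fin (m+1))) o k := by
  have h1 : (m + 1 - k) ^ k ≤ m.descFactorial k := by
    rw [Nat.descFactorial_eq_prod_range]
    calc (m+1-k)^k = ∏ _i ∈ Finset.range k, (m+1-k) := by
          rw [Finset.prod_const, Finset.card_range]
      _ ≤ ∏ i ∈ Finset.range k, (m - i) :=
          Finset.prod_le_prod' fun i hi => by
            have := Finset.mem_range.mp hi; omega
  refine h1.trans ?_
  have h2 : m.descFactorial k = Nat.card (Fin k ↪ Fin m) := by
    simp [Nat.card_eq_fintype_card, Fintype.card_embedding_eq]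
  rw [h2, sawCount]
  haveI := sawFinite (⊤ : SimpleGraph (Fin (m+1))) o k
  have hprop : ∀ f : Fin k ↪ Fin m,
      IsSAWFrom (⊤ : SimpleGraph (Fin (m+1))) o (o :: List.ofFn fun i => o.succAbove (f i)) ∧
      (o :: List.ofFn fun i => o.succAbove (f i)).length = k + 1 := by
    intro f
    have hnd : (o :: List.ofFn fun i => o.succAbove (f i)).Nodup := by
      refine List.nodup_cons.mpr ⟨?_, ?_⟩
      · simp only [List.mem_ofFn]
        rintro ⟨i, hi⟩
        exact Fin.succAbove_ne o (f i) hi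
      · exact List.nodup_ofFn.mpr (Fin.succAbove_right_injective.comp f.injective)
    refine ⟨⟨rfl, ?_, hnd⟩, by simp⟩
    exact (List.Pairwise.isChain hnd).imp fun a b h => by simpa using h
  exact Nat.card_le_card_of_injective
    (fun f => ⟨o :: List.ofFn fun i => o.succAbove (f i), hprop f⟩) (by
      intro f g hfg
      simp only [Subtype.mk.injEq, List.cons.injEq, List.ofFn_inj, true_and] at hfg
      ext i
      exact congrArg Fin.val (Fin.succAbove_right_injective (congrFun hfg i)))

end Aux

set_option maxHeartbeats 1000000 in
/-- If `ε > 0` and `n · x_n → 1 + ε`, then for the complete graphs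
`K_n`, `γ(x_n, K_n) → ∞`. -/
theorem complete_superCritical_gamma (ε : ℝ) (hε : 0 < ε)
    (x : ℕ → ℝ) (hx : ∀ n, 0 < x n)
    (hlim : Tendsto (fun n : ℕ => (n : ℝ) * x n) atTop (𝓝 (1 + ε))) :
    Tendsto (fun n : ℕ => completeGamma n (x n)) atTop atTop := by
  set δ : ℝ := ε / (8 * (1 + ε)) with hδdef
  have hδpos : 0 < δ := by positivity
  have hδlt : δ < 1/8 := by
    rw [hδdef, div_lt_iff₀ (by positivity)]; nlinarith
  have hlogε : 0 < Real.log (1 + ε/4) := Real.log_pos (by linarith)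
  set c : ℝ := δ / 2 * Real.log (1 + ε / 4) with hcdef
  have hcpos : 0 < c := by positivity
  have hmain : Tendsto (fun n : ℕ => c * ((n : ℝ) / Real.log n)) atTop atTop := by
    have h0 : Tendsto (fun y : ℝ => Real.log y / y) atTop (𝓝 0) :=
      Real.isLittleO_log_id_atTop.tendsto_div_nhds_zero
    have h1 : Tendsto (fun y : ℝ => Real.log y / y) atTop (𝓝[>] (0:ℝ)) := by
      refine tendsto_nhdsWithin_of_tendsto_nhds_of_eventually_within _ h0 ?_
      filter_upwards [eventually_gt_atTop (1:ℝ)] with y hy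
      exact div_pos (Real.log_pos hy) (by linarith)
    have h2 : Tendsto (fun y : ℝ => y / Real.log y) atTop atTop := by
      have h3 := h1.inv_tendsto_nhdsGT_zero
      have heq : (fun y : ℝ => Real.log y / y)⁻¹ = fun y : ℝ => y / Real.log y := by
        funext y; simp [Pi.inv_apply, inv_div]
      rwa [heq] at h3
    exact (h2.comp tendsto_natCast_atTop_atTop).const_mul_atTop hcpos
  refine tendsto_atTop_mono' atTop ?_ hmain
  have hub : ∀ᶠ n : ℕ in atTop, (n : ℝ) * x n ≤ 2 * (1 + ε) :=
    hlim.eventually_le_const (by linarith)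
  have hlb : ∀ᶠ n : ℕ in atTop, 1 + ε/2 ≤ (n : ℝ) * x n :=
    hlim.eventually_const_le (by linarith)
  have hbig : ∀ᶠ n : ℕ in atTop, 2 ≤ δ * (n : ℝ) :=
    (tendsto_natCast_atTop_atTop.const_mul_atTop hδpos).eventually_ge_atTop 2
  filter_upwards [hub, hlb, hbig, eventually_ge_atTop 2] with n hub' hlb' hbig' hn2
  obtain ⟨m, rfl⟩ : ∃ m, n = m + 1 := ⟨n - 1, by omega⟩
  have hm1 : 1 ≤ m := by omega
  have hxpos := hx (m+1)
  set o : Fin (m+1) := ⟨0, Nat.succ_pos m⟩ with ho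
  set K : ℕ := ⌊δ * ((m+1 : ℕ) : ℝ)⌋₊ with hKdef
  have hnpos : (0:ℝ) < ((m+1 : ℕ) : ℝ) := by positivity
  have hKfloor : (K : ℝ) ≤ δ * ((m+1 : ℕ) : ℝ) := Nat.floor_le (by positivity)
  have hKlt : δ * ((m+1 : ℕ) : ℝ) < K + 1 := Nat.lt_floor_add_one _
  have hK1 : 1 ≤ K := by
    have : (1:ℝ) ≤ (K:ℝ) := by linarith
    exact_mod_cast this
  have hm1' : (1:ℝ) ≤ (m:ℝ) := by exact_mod_cast hm1
  have hKm : K ≤ m := by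
    have h8 : ((m+1 : ℕ) : ℝ) / 8 ≤ (m : ℝ) := by push_cast; linarith
    have : (K : ℝ) ≤ (m : ℝ) := by nlinarith
    exact_mod_cast this
  -- partition function bounds
  set Z : ℝ := sawZ (⊤ : SimpleGraph (Fin (m+1))) o (x (m+1)) with hZdef
  have hcard : Fintype.card (Fin (m+1)) = m + 1 := Fintype.card_fin _
  have hnonneg : ∀ k ∈ Finset.range (Fintype.card (Fin (m+1))),
      0 ≤ (sawCount (⊤ : SimpleGraph (Fin (m+1))) o k : ℝ) * x (m+1) ^ k := by
    intro k _; positivity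
  have hZ1 : 1 ≤ Z := by
    have h0 : (1:ℝ) ≤ (sawCount (⊤ : SimpleGraph (Fin (m+1))) o 0 : ℝ) * x (m+1) ^ 0 := by
      have := sawCount_ge m 0 (Nat.zero_le m) o
      simp only [pow_zero, mul_one]
      exact_mod_cast this
    refine le_trans h0 ?_
    exact Finset.single_le_sum hnonneg (by rw [hcard]; exact Finset.mem_range.mpr (by omega))
  have hZpos : 0 < Z := lt_of_lt_of_le one_pos hZ1
  have hKx : (K : ℝ) * x (m+1) ≤ ε / 4 := by
    have h1 : (K : ℝ) * x (m+1) ≤ δ * (((m+1:ℕ):ℝ) * x (m+1)) := by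
      rw [← mul_assoc]
      exact mul_le_mul_of_nonneg_right hKfloor hxpos.le
    have h2 : δ * (((m+1:ℕ):ℝ) * x (m+1)) ≤ δ * (2 * (1 + ε)) :=
      mul_le_mul_of_nonneg_left hub' hδpos.le
    have h3 : δ * (2 * (1 + ε)) = ε / 4 := by
      rw [hδdef]; field_simp; ring
    linarith
  have hfac : 1 + ε/4 ≤ ((m + 1 - K : ℕ) : ℝ) * x (m+1) := by
    have hcast : ((m + 1 - K : ℕ) : ℝ) = ((m+1:ℕ):ℝ) - (K:ℝ) := by
      rw [Nat.cast_sub (by omega)]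
    rw [hcast, sub_mul]
    linarith
  have hZK : (1 + ε/4) ^ K ≤ Z := by
    have hcnt : (((m + 1 - K) ^ K : ℕ) : ℝ) ≤
        (sawCount (⊤ : SimpleGraph (Fin (m+1))) o K : ℝ) := by
      exact_mod_cast sawCount_ge m K hKm o
    have hterm : (1 + ε/4) ^ K ≤
        (sawCount (⊤ : SimpleGraph (Fin (m+1))) o K : ℝ) * x (m+1) ^ K := by
      calc (1 + ε/4) ^ K ≤ (((m + 1 - K : ℕ) : ℝ) * x (m+1)) ^ K :=
            pow_le_pow_left₀ (by linarith) hfac K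
        _ = (((m + 1 - K : ℕ) : ℝ)) ^ K * x (m+1) ^ K := mul_pow _ _ _
        _ ≤ (sawCount (⊤ : SimpleGraph (Fin (m+1))) o K : ℝ) * x (m+1) ^ K := by
            have : (((m + 1 - K : ℕ) : ℝ)) ^ K = (((m + 1 - K) ^ K : ℕ) : ℝ) := by push_cast; ring
            rw [this]
            exact mul_le_mul_of_nonneg_right hcnt (by positivity)
    refine le_trans hterm ?_
    exact Finset.single_le_sum hnonneg (by rw [hcard]; exact Finset.mem_range.mpr (by omega))
  have hlogZ : (δ / 2) * ((m+1:ℕ):ℝ) * Real.log (1 + ε/4) ≤ Real.log Z := by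
    have h1 : (K : ℝ) * Real.log (1 + ε/4) ≤ Real.log Z := by
      have := Real.log_le_log (by positivity) hZK
      rwa [Real.log_pow] at this
    have h2 : (δ / 2) * ((m+1:ℕ):ℝ) ≤ (K : ℝ) := by linarith
    nlinarith
  -- expected length bounds
  set S : ℝ := ∑ k ∈ Finset.range (Fintype.card (Fin (m+1))),
      (k : ℝ) * (sawCount (⊤ : SimpleGraph (Fin (m+1))) o k : ℝ) * x (m+1) ^ k with hSdef
  have hSnonneg : ∀ k ∈ Finset.range (Fintype.card (Fin (m+1))),
      0 ≤ (k : ℝ) * (sawCount (⊤ : SimpleGraph (Fin (m+1))) o k : ℝ) * x (m+1) ^ k := by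
    intro k _; positivity
  have hSpos : 0 < S := by
    have hc1 : (1:ℝ) ≤ (sawCount (⊤ : SimpleGraph (Fin (m+1))) o 1 : ℝ) := by
      have := sawCount_ge m 1 hm1 o
      have h1 : 1 ≤ (m + 1 - 1) ^ 1 := by rw [pow_one]; omega
      exact_mod_cast le_trans h1 this
    have hterm : 0 < ((1:ℕ) : ℝ) * (sawCount (⊤ : SimpleGraph (Fin (m+1))) o 1 : ℝ) * x (m+1) ^ 1 := by
      rw [Nat.cast_one, one_mul, pow_one]
      exact mul_pos (by linarith) hxpos
    have hmem : 1 ∈ Finset.range (Fintype.card (Fin (m+1))) := by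
      rw [hcard]; exact Finset.mem_range.mpr (by omega)
    rw [hSdef]
    exact lt_of_lt_of_le hterm (Finset.single_le_sum hSnonneg hmem)
  have hSle : S ≤ (m : ℝ) * Z := by
    rw [hZdef, sawZ, Finset.mul_sum, hSdef]
    refine Finset.sum_le_sum fun k hk => ?_
    have hkm : (k : ℝ) ≤ (m : ℝ) := by
      rw [hcard] at hk
      have := Finset.mem_range.mp hk
      exact_mod_cast (by omega : k ≤ m)
    rw [← mul_assoc]
    have : 0 ≤ (sawCount (⊤ : SimpleGraph (Fin (m+1))) o k : ℝ) * x (m+1) ^ k := by positivity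
    nlinarith [this]
  set L : ℝ := sawL (⊤ : SimpleGraph (Fin (m+1))) o (x (m+1)) with hLdef
  have hLeq : L = Z⁻¹ * S := rfl
  have hLpos : 0 < L := by
    rw [hLeq]; exact mul_pos (inv_pos.mpr hZpos) hSpos
  have hLle : L ≤ (m : ℝ) := by
    rw [hLeq]
    have h1 : Z⁻¹ * S ≤ Z⁻¹ * ((m:ℝ) * Z) :=
      mul_le_mul_of_nonneg_left hSle (inv_nonneg.mpr hZpos.le)
    have h2 : Z⁻¹ * ((m:ℝ) * Z) = (m:ℝ) := by field_simp
    linarith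
  have hlogLpos : 0 < Real.log (L + 1) := Real.log_pos (by linarith)
  have hlogLle : Real.log (L + 1) ≤ Real.log ((m+1:ℕ):ℝ) := by
    apply Real.log_le_log (by linarith)
    push_cast; linarith
  have hlognpos : 0 < Real.log ((m+1:ℕ):ℝ) := lt_of_lt_of_le hlogLpos hlogLle
  -- conclude
  have hgamma : completeGamma (m+1) (x (m+1)) = Real.log Z / Real.log (L + 1) := by
    rw [completeGamma, dif_pos (Nat.succ_pos m)]
    rfl
  rw [hgamma]
  have hcn : c * ((m+1:ℕ):ℝ) ≤ Real.log Z := by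
    rw [hcdef]
    calc δ / 2 * Real.log (1 + ε / 4) * ((m+1:ℕ):ℝ)
        = (δ / 2) * ((m+1:ℕ):ℝ) * Real.log (1 + ε/4) := by ring
      _ ≤ Real.log Z := hlogZ
  have hlogZnn : 0 ≤ Real.log Z := Real.log_nonneg hZ1
  calc c * (((m+1:ℕ):ℝ) / Real.log ((m+1:ℕ):ℝ))
      = (c * ((m+1:ℕ):ℝ)) / Real.log ((m+1:ℕ):ℝ) := by ring
    _ ≤ Real.log Z / Real.log ((m+1:ℕ):ℝ) :=
        div_le_div_of_nonneg_right hcn hlognpos.le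
    _ ≤ Real.log Z / Real.log (L + 1) :=
        div_le_div_of_nonneg_left hlogZnn hlogLpos hlogLle
end

section
/- Let d ≥ 3 and let G be a finite vertex-transitive d-regular simple graph containing a cycle, with girth g. Then for every vertex o and every k ≥ 1, the number of self-avoiding walks of length k from o satisfies |SAW_k(o,G)| ≤ d(d−1)^{k−1} · (1 − (d−1)^{−g})^{⌊k/g⌋}. -/
open Filter Topology

/-!
Every self-avoiding walk is non-backtracking, and a `d`-regular graph has `d (d-1)^(m-1)`
non-backtracking walks of length `m` from a vertex, and `(d-1)^m` non-backtracking continuations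
of length `m` of a given walk. By vertex-transitivity every vertex `v` lies on a cycle of length
`g` (the girth); one of its two orientations does not reverse the last step into `v`, so running
around it is a non-backtracking continuation that is not self-avoiding. Hence each further block
of `g` steps of a self-avoiding walk has at most `(d-1)^g - 1 = (d-1)^g (1 - (d-1)^(-g))` options,
and the first block from `o` (where both orientations count) at most `d (d-1)^(g-1) - 2`.
-/
section NonBacktracking

variable {V : Type*} {G : SimpleGraph V}

theorem isNBWalk_iff {l : List V} :
    IsNBWalk G l ↔ l.IsChain G.Adj ∧ ∀ i, i + 2 < l.length → l[i]? ≠ l[i + 2]? :=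
  Iff.rfl

theorem isNBWalk_cons_iff {a : V} {l : List V} :
    IsNBWalk G (a :: l) ↔ (∀ b ∈ l.head?, G.Adj a b) ∧ l[1]? ≠ some a ∧ IsNBWalk G l := by
  simp only [isNBWalk_iff, List.isChain_cons, List.length_cons]
  constructor
  · rintro ⟨⟨hhead, hchain⟩, hnb⟩
    refine ⟨hhead, fun h => ?_, hchain, fun i hi => by simpa using hnb (i + 1) (by omega)⟩
    have hl : 1 < l.length := by
      by_contra! hl
      simp [List.getElem?_eq_none hl] at h
    exact hnb 0 (by omega) (by simp [h])
  · rintro ⟨hhead, ha, hchain, hnb⟩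
    refine ⟨⟨hhead, hchain⟩, fun i hi => ?_⟩
    cases i with
    | zero => simpa [eq_comm] using ha
    | succ i => simpa using hnb i (by omega)

theorem IsNBWalk.of_nodup {l : List V} (hl : l.IsChain G.Adj) (hnd : l.Nodup) :
    IsNBWalk G l :=
  isNBWalk_iff.2 ⟨hl, fun i hi => by
    rw [List.getElem?_eq_getElem (by omega), List.getElem?_eq_getElem hi, ne_eq,
      Option.some_inj, hnd.getElem_inj_iff]
    omega⟩

theorem SimpleGraph.Walk.IsCycle.isNBWalk_support {v : V} {w : G.Walk v v} (hw : w.IsCycle) :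
    IsNBWalk G w.support := by
  refine isNBWalk_iff.2 ⟨w.isChain_adj_support, fun i hi => ?_⟩
  rw [w.length_support] at hi
  rw [List.getElem?_eq_getElem (by simp; omega), List.getElem?_eq_getElem (by simp; omega),
    ← w.getVert_eq_support_getElem (by omega), ← w.getVert_eq_support_getElem (by omega)]
  simpa using hw.getVert_sub_one_ne_getVert_add_one (i := i + 1) (by omega)

theorem SimpleGraph.Walk.support_getElem?_one {u v : V} {w : G.Walk u v} (hw : ¬ w.Nil) :
    w.support[1]? = some w.snd := by
  rw [List.getElem?_eq_getElem (by simpa using w.not_nil_iff_lt_length.1 hw),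
    w.support_getElem_one]

theorem SimpleGraph.Walk.IsCycle.isNBWalk_cons_support {a v : V} {w : G.Walk v v}
    (hw : w.IsCycle) (ha : G.Adj a v) (hsnd : w.snd ≠ a) : IsNBWalk G (a :: w.support) := by
  refine isNBWalk_cons_iff.2 ⟨fun b hb => ?_, ?_, hw.isNBWalk_support⟩
  · rw [← w.cons_tail_support, List.head?_cons, Option.mem_some_iff] at hb
    exact hb ▸ ha
  · rwa [w.support_getElem?_one hw.not_nil, ne_eq, Option.some_inj]

end NonBacktracking

theorem SawRegular.card_neighborFinset {V : Type*} [Fintype V] {G : SimpleGraph V}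
    [DecidableRel G.Adj] {d : ℕ} (hreg : SawRegular G d) (v : V) :
    (G.neighborFinset v).card = d := by
  rw [← hreg v, Nat.card_eq_fintype_card, SimpleGraph.card_neighborFinset_eq_degree,
    SimpleGraph.card_neighborSet_eq_degree]

theorem SimpleGraph.VertexTransitive.exists_isCycle_length_eq_girth {V : Type*}
    {G : SimpleGraph V} (hG : G.VertexTransitive) (hcyc : ¬ G.IsAcyclic) (v : V) :
    ∃ w : G.Walk v v, w.IsCycle ∧ w.length = G.girth := by
  obtain ⟨a, w, hw, hlen⟩ := SimpleGraph.exists_girth_eq_length.2 hcyc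
  obtain ⟨φ, rfl⟩ := hG a v
  exact ⟨w.map φ.toHom, hw.map φ.injective, by simp [hlen]⟩

namespace SimpleGraph

open Finset

section Extensions

variable {V : Type*} [Finite V] (G : SimpleGraph V)

open Classical in
noncomputable def sawExtensions (p : List V) (m : ℕ) : Finset (List V) :=
  (List.finite_length_eq V m).toFinset.filter fun t => (p ++ t).IsChain G.Adj ∧ (p ++ t).Nodup

open Classical in
noncomputable def nbExtensions (p : List V) (m : ℕ) : Finset (List V) :=
  (List.finite_length_eq V m).toFinset.filter fun t => IsNBWalk G (p ++ t)

variable {G}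

theorem mem_sawExtensions {p t : List V} {m : ℕ} :
    t ∈ G.sawExtensions p m ↔ t.length = m ∧ (p ++ t).IsChain G.Adj ∧ (p ++ t).Nodup := by
  simp [sawExtensions]

theorem mem_nbExtensions {p t : List V} {m : ℕ} :
    t ∈ G.nbExtensions p m ↔ t.length = m ∧ IsNBWalk G (p ++ t) := by
  simp [nbExtensions]

theorem sawCount_eq_card_sawExtensions (o : V) (k : ℕ) :
    sawCount G o k = #(G.sawExtensions [o] k) := by
  have hset : {l | IsSAWFrom G o l ∧ l.length = k + 1} = List.cons o '' G.sawExtensions [o] k := by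
    ext l
    cases l with
    | nil => simp [IsSAWFrom]
    | cons a t =>
      simp only [IsSAWFrom, Set.mem_ofPred_eq, Set.mem_image, Finset.mem_coe, mem_sawExtensions,
        List.head?_cons, Option.some_inj, List.length_cons, List.cons_append, List.nil_append,
        List.cons.injEq]
      constructor
      · rintro ⟨⟨rfl, hchain, hnd⟩, hlen⟩
        exact ⟨t, ⟨by omega, hchain, hnd⟩, rfl, rfl⟩
      · rintro ⟨t, ⟨hlen, hchain, hnd⟩, rfl, rfl⟩
        exact ⟨⟨rfl, hchain, hnd⟩, by omega⟩
  change Nat.card {l | IsSAWFrom G o l ∧ l.length = k + 1} = _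
  rw [Nat.card_coe_set_eq, hset, Set.ncard_image_of_injective _ List.cons_injective,
    Set.ncard_coe_finset]

theorem sawExtensions_subset_nbExtensions {p r : List V} (hr : r <:+ p) (m : ℕ) :
    G.sawExtensions p m ⊆ G.nbExtensions r m := by
  intro t ht
  obtain ⟨hlen, hchain, hnd⟩ := mem_sawExtensions.1 ht
  have hinfix : r ++ t <:+: p ++ t := by
    obtain ⟨s, rfl⟩ := hr
    exact ⟨s, [], by simp⟩
  exact mem_nbExtensions.2 ⟨hlen, .of_nodup (hchain.infix hinfix) (hnd.sublist hinfix.sublist)⟩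

theorem Walk.IsCycle.support_tail_notMem_sawExtensions {v : V} {w : G.Walk v v}
    (hw : w.IsCycle) {p : List V} (hv : v ∈ p) (m : ℕ) :
    w.support.tail ∉ G.sawExtensions p m := fun h =>
  List.disjoint_of_nodup_append (mem_sawExtensions.1 h).2.2 hv (w.end_mem_tail_support hw.not_nil)

theorem card_sawExtensions_add_le (p : List V) (m n : ℕ) :
    #(G.sawExtensions p (m + n)) ≤ ∑ b ∈ G.sawExtensions p m, #(G.sawExtensions (p ++ b) n) := by
  classical
  calc #(G.sawExtensions p (m + n))
      ≤ #((G.sawExtensions p m).biUnion fun b => (G.sawExtensions (p ++ b) n).image (b ++ ·)) := by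
        refine card_le_card fun t ht => ?_
        obtain ⟨hlen, hchain, hnd⟩ := mem_sawExtensions.1 ht
        have hsplit : p ++ t.take m ++ t.drop m = p ++ t := by
          rw [List.append_assoc, List.take_append_drop]
        have hprefix : p ++ t.take m <+: p ++ t := ⟨_, hsplit⟩
        simp only [mem_biUnion, mem_image, mem_sawExtensions]
        refine ⟨t.take m, ⟨by simp; omega, hchain.prefix hprefix, hnd.sublist hprefix.sublist⟩,
          t.drop m, ⟨by simp; omega, hsplit ▸ hchain, hsplit ▸ hnd⟩, List.take_append_drop m t⟩
    _ ≤ ∑ b ∈ G.sawExtensions p m, #(G.sawExtensions (p ++ b) n) :=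
        card_biUnion_le.trans (sum_le_sum fun _ _ => card_image_le)

end Extensions

section Regular

variable {V : Type*} [Fintype V] {G : SimpleGraph V} [DecidableRel G.Adj] {d : ℕ}

theorem card_nbExtensions_pair_le (hreg : SawRegular G d) (m : ℕ) {a b : V} (hab : G.Adj a b) :
    #(G.nbExtensions [a, b] m) ≤ (d - 1) ^ m := by
  classical
  induction m generalizing a b with
  | zero =>
    refine (card_le_card fun t ht => ?_).trans (card_singleton ([] : List V)).le
    simpa using (mem_nbExtensions.1 ht).1
  | succ m ih =>
    calc #(G.nbExtensions [a, b] (m + 1))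
        ≤ #(((G.neighborFinset b).erase a).biUnion
            fun u => (G.nbExtensions [b, u] m).image (u :: ·)) := by
          refine card_le_card fun t ht => ?_
          obtain ⟨hlen, hnb⟩ := mem_nbExtensions.1 ht
          obtain ⟨u, t, rfl⟩ := List.exists_cons_of_length_eq_add_one hlen
          obtain ⟨-, hua, hnb⟩ := isNBWalk_cons_iff.1 hnb
          obtain ⟨hbu, -, -⟩ := isNBWalk_cons_iff.1 hnb
          simp only [mem_biUnion, mem_erase, mem_neighborFinset, mem_image, mem_nbExtensions]
          exact ⟨u, ⟨by simpa using hua, hbu u rfl⟩, t, ⟨by simpa using hlen, hnb⟩, rfl⟩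
      _ ≤ ∑ u ∈ (G.neighborFinset b).erase a, #(G.nbExtensions [b, u] m) :=
          card_biUnion_le.trans (sum_le_sum fun _ _ => card_image_le)
      _ ≤ #((G.neighborFinset b).erase a) • (d - 1) ^ m :=
          sum_le_card_nsmul _ _ _ fun u hu => ih (by simpa using (mem_erase.1 hu).2)
      _ = (d - 1) ^ (m + 1) := by
          rw [card_erase_of_mem (by simpa using hab.symm), hreg.card_neighborFinset, smul_eq_mul,
            pow_succ, mul_comm]

theorem card_nbExtensions_singleton_le (hreg : SawRegular G d) (m : ℕ) (a : V) :
    #(G.nbExtensions [a] (m + 1)) ≤ d * (d - 1) ^ m := by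
  classical
  calc #(G.nbExtensions [a] (m + 1))
      ≤ #((G.neighborFinset a).biUnion fun u => (G.nbExtensions [a, u] m).image (u :: ·)) := by
        refine card_le_card fun t ht => ?_
        obtain ⟨hlen, hnb⟩ := mem_nbExtensions.1 ht
        obtain ⟨u, t, rfl⟩ := List.exists_cons_of_length_eq_add_one hlen
        obtain ⟨hau, -, -⟩ := isNBWalk_cons_iff.1 hnb
        simp only [mem_biUnion, mem_neighborFinset, mem_image, mem_nbExtensions]
        exact ⟨u, hau u rfl, t, ⟨by simpa using hlen, hnb⟩, rfl⟩
    _ ≤ ∑ u ∈ G.neighborFinset a, #(G.nbExtensions [a, u] m) :=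
        card_biUnion_le.trans (sum_le_sum fun _ _ => card_image_le)
    _ ≤ #(G.neighborFinset a) • (d - 1) ^ m :=
        sum_le_card_nsmul _ _ _ fun u hu => card_nbExtensions_pair_le hreg m (by simpa using hu)
    _ = d * (d - 1) ^ m := by rw [hreg.card_neighborFinset, smul_eq_mul]

theorem card_sawExtensions_singleton_le (hreg : SawRegular G d) (a : V) (m : ℕ) :
    #(G.sawExtensions [a] (m + 1)) ≤ d * (d - 1) ^ m :=
  (card_le_card (sawExtensions_subset_nbExtensions List.suffix_rfl _)).trans
    (card_nbExtensions_singleton_le hreg m a)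

end Regular

section Girth

variable {V : Type*} [Fintype V] {G : SimpleGraph V} [DecidableRel G.Adj] {d : ℕ}

/-- A girth cycle through `b` that does not start with the edge back to `a` is a
non-backtracking continuation of `a, b` that is not self-avoiding. -/
theorem card_sawExtensions_girth_add_one_le (hG : G.VertexTransitive) (hcyc : ¬ G.IsAcyclic)
    (hreg : SawRegular G d) (q : List V) {a b : V} (hab : G.Adj a b) :
    #(G.sawExtensions (q ++ [a, b]) G.girth) + 1 ≤ (d - 1) ^ G.girth := by
  classical
  obtain ⟨w, hw, hlen, hsnd⟩ : ∃ w : G.Walk b b, w.IsCycle ∧ w.length = G.girth ∧ w.snd ≠ a := by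
    obtain ⟨w, hw, hlen⟩ := hG.exists_isCycle_length_eq_girth hcyc b
    by_cases h : w.snd = a
    · refine ⟨w.reverse, hw.reverse, by simpa, ?_⟩
      rw [Walk.snd_reverse, ← h]
      exact hw.snd_ne_penultimate.symm
    · exact ⟨w, hw, hlen, h⟩
  have hc : w.support.tail ∈ G.nbExtensions [a, b] G.girth := by
    refine mem_nbExtensions.2 ⟨by simp [hlen], ?_⟩
    rw [List.cons_append, List.singleton_append, w.cons_tail_support]
    exact hw.isNBWalk_cons_support hab hsnd
  calc #(G.sawExtensions (q ++ [a, b]) G.girth) + 1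
      = #(insert w.support.tail (G.sawExtensions (q ++ [a, b]) G.girth)) :=
        (card_insert_of_notMem (hw.support_tail_notMem_sawExtensions (by simp) _)).symm
    _ ≤ #(G.nbExtensions [a, b] G.girth) :=
        card_le_card <|
          insert_subset hc (sawExtensions_subset_nbExtensions (List.suffix_append q _) _)
    _ ≤ (d - 1) ^ G.girth := card_nbExtensions_pair_le hreg _ hab

/-- Both orientations of a girth cycle through `o` are non-backtracking but not self-avoiding. -/
theorem card_sawExtensions_singleton_girth_add_two_le (hG : G.VertexTransitive)
    (hcyc : ¬ G.IsAcyclic) (hreg : SawRegular G d) (o : V) :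
    #(G.sawExtensions [o] G.girth) + 2 ≤ d * (d - 1) ^ (G.girth - 1) := by
  classical
  obtain ⟨w, hw, hlen⟩ := hG.exists_isCycle_length_eq_girth hcyc o
  have hc : ∀ w : G.Walk o o, w.IsCycle → w.length = G.girth →
      w.support.tail ∈ G.nbExtensions [o] G.girth := fun w hw hlen =>
    mem_nbExtensions.2 ⟨by simp [hlen], w.cons_tail_support ▸ hw.isNBWalk_support⟩
  have hne : w.support.tail ≠ w.reverse.support.tail := fun h => by
    have := congrArg List.head? h
    rw [List.head?_tail, List.head?_tail, w.support_getElem?_one hw.not_nil,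
      w.reverse.support_getElem?_one hw.reverse.not_nil, Walk.snd_reverse, Option.some_inj] at this
    exact hw.snd_ne_penultimate this
  have hS := hw.support_tail_notMem_sawExtensions (List.mem_singleton_self o) G.girth
  have hS' := hw.reverse.support_tail_notMem_sawExtensions (List.mem_singleton_self o) G.girth
  calc #(G.sawExtensions [o] G.girth) + 2
      = #(insert w.support.tail (insert w.reverse.support.tail (G.sawExtensions [o] G.girth))) := by
        rw [card_insert_of_notMem fun h => (mem_insert.1 h).elim hne hS, card_insert_of_notMem hS']
    _ ≤ #(G.nbExtensions [o] G.girth) :=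
        card_le_card (insert_subset (hc w hw hlen) (insert_subset (hc _ hw.reverse (by simpa))
          (sawExtensions_subset_nbExtensions List.suffix_rfl _)))
    _ ≤ d * (d - 1) ^ (G.girth - 1) := by
        have hg := G.three_le_girth hcyc
        obtain ⟨n, hn⟩ : ∃ n, G.girth = n + 1 := ⟨G.girth - 1, by omega⟩
        rw [hn]
        exact card_nbExtensions_singleton_le hreg n o

theorem card_sawExtensions_add_girth_le (hG : G.VertexTransitive) (hcyc : ¬ G.IsAcyclic)
    (hreg : SawRegular G d) (o : V) {m : ℕ} (hm : 1 ≤ m) :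
    #(G.sawExtensions [o] (m + G.girth)) ≤ ((d - 1) ^ G.girth - 1) * #(G.sawExtensions [o] m) := by
  calc #(G.sawExtensions [o] (m + G.girth))
      ≤ ∑ b ∈ G.sawExtensions [o] m, #(G.sawExtensions ([o] ++ b) G.girth) :=
        card_sawExtensions_add_le _ _ _
    _ ≤ #(G.sawExtensions [o] m) • ((d - 1) ^ G.girth - 1) := by
        refine sum_le_card_nsmul _ _ _ fun b hb => ?_
        obtain ⟨hlen, hchain, -⟩ := mem_sawExtensions.1 hb
        obtain ⟨b, y, rfl⟩ := b.eq_nil_or_concat'.resolve_left (by rintro rfl; simp at hlen; omega)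
        obtain ⟨q, x, hq⟩ := ([o] ++ b).eq_nil_or_concat'.resolve_left (by simp)
        have hsplit : [o] ++ (b ++ [y]) = q ++ [x, y] := by rw [← List.append_assoc, hq]; simp
        rw [hsplit] at hchain ⊢
        have hxy : G.Adj x y := List.isChain_pair.1 (hchain.suffix (List.suffix_append q _))
        have := card_sawExtensions_girth_add_one_le hG hcyc hreg q hxy
        omega
    _ = ((d - 1) ^ G.girth - 1) * #(G.sawExtensions [o] m) := by rw [smul_eq_mul, mul_comm]

end Girth

end SimpleGraph

theorem le_girth_bound_of_recursion {f : ℕ → ℕ} {d g : ℕ} (hd : 2 ≤ d) (hg : 1 ≤ g)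
    (hbase : ∀ m, f (m + 1) ≤ d * (d - 1) ^ m)
    (hgirth : f g + 2 ≤ d * (d - 1) ^ (g - 1))
    (hstep : ∀ m, 1 ≤ m → f (m + g) ≤ ((d - 1) ^ g - 1) * f m) (k : ℕ) (hk : 1 ≤ k) :
    (f k : ℝ) ≤ d * ((d : ℝ) - 1) ^ (k - 1) * (1 - ((d : ℝ) - 1)⁻¹ ^ g) ^ (k / g) := by
  set D : ℝ := d - 1
  have hD : ((d - 1 : ℕ) : ℝ) = D := by rw [Nat.cast_sub (by omega), Nat.cast_one]
  have hD1 : 1 ≤ D := by rw [← hD]; exact_mod_cast (by omega : 1 ≤ d - 1)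
  induction k using Nat.strong_induction_on with
  | _ k ih =>
  rcases lt_trichotomy k g with hlt | rfl | hgt
  · obtain ⟨m, rfl⟩ : ∃ m, k = m + 1 := ⟨k - 1, by omega⟩
    rw [Nat.div_eq_of_lt hlt, pow_zero, mul_one, Nat.add_sub_cancel, ← hD]
    exact_mod_cast hbase m
  · -- the loss `2` dominates `d (d-1)^(g-1) (d-1)^(-g) = d / (d-1)`
    have hfg : (f k : ℝ) + 2 ≤ d * D ^ (k - 1) := by rw [← hD]; exact_mod_cast hgirth
    have hdD : (d : ℝ) ≤ 2 * D := by simp only [D]; linarith [(by exact_mod_cast hd : (2 : ℝ) ≤ d)]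
    have hpow : D ^ k = D * D ^ (k - 1) := by rw [← pow_succ']; congr 1; omega
    rw [Nat.div_self hg, pow_one, mul_sub, mul_one, inv_pow, ← div_eq_mul_inv, hpow,
      le_sub_iff_add_le]
    calc (f k : ℝ) + d * D ^ (k - 1) / (D * D ^ (k - 1))
        = f k + d / D := by rw [mul_div_mul_right _ _ (by positivity)]
      _ ≤ f k + 2 := by gcongr; rw [div_le_iff₀ (by positivity)]; linarith
      _ ≤ d * D ^ (k - 1) := hfg
  · obtain ⟨m, rfl⟩ : ∃ m, k = m + g := ⟨k - g, by omega⟩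
    have hm : 1 ≤ m := by omega
    have hcast : (((d - 1) ^ g - 1 : ℕ) : ℝ) = D ^ g - 1 := by
      rw [Nat.cast_sub (Nat.one_le_pow _ _ (by omega)), Nat.cast_pow, hD, Nat.cast_one]
    have hDg : D ^ g * (1 - D⁻¹ ^ g) = D ^ g - 1 := by
      rw [mul_sub, mul_one, ← mul_pow, mul_inv_cancel₀ (by positivity), one_pow]
    calc (f (m + g) : ℝ)
        ≤ (D ^ g - 1) * f m := by rw [← hcast]; exact_mod_cast hstep m hm
      _ ≤ (D ^ g - 1) * (d * D ^ (m - 1) * (1 - D⁻¹ ^ g) ^ (m / g)) := by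
          gcongr
          · linarith [one_le_pow₀ (n := g) hD1]
          · exact ih m (by omega) hm
      _ = d * D ^ (m + g - 1) * (1 - D⁻¹ ^ g) ^ ((m + g) / g) := by
          rw [← hDg, Nat.add_div_right _ (by omega), pow_succ, show m + g - 1 = m - 1 + g by omega,
            pow_add]
          ring

/-- For `d ≥ 3` and a finite vertex-transitive `d`-regular graph `G`
containing a cycle, with girth `g`: for every vertex `o` and every `k ≥ 1`,
`|SAW_k(o,G)| ≤ d(d−1)^{k−1} (1 − (d−1)^{−g})^{⌊k/g⌋}`. -/
theorem sawCount_upper_bound_girth (d : ℕ) (hd : 3 ≤ d)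
    {V : Type*} [Fintype V] (G : SimpleGraph V)
    (hG : G.VertexTransitive) (hreg : SawRegular G d) (hcyc : ¬ G.IsAcyclic)
    (o : V) (k : ℕ) (hk : 1 ≤ k) :
    (sawCount G o k : ℝ) ≤
      (d : ℝ) * ((d : ℝ) - 1) ^ (k - 1) *
        (1 - (((d : ℝ) - 1)⁻¹) ^ G.girth) ^ (k / G.girth) := by
  classical
  have hg := G.three_le_girth hcyc
  rw [G.sawCount_eq_card_sawExtensions]
  exact le_girth_bound_of_recursion (f := fun n => (G.sawExtensions [o] n).card) (by omega)
    (by omega) (G.card_sawExtensions_singleton_le hreg o)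
    (G.card_sawExtensions_singleton_girth_add_two_le hG hcyc hreg o)
    (fun _ hm => G.card_sawExtensions_add_girth_le hG hcyc hreg o hm) k hk
end
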